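/- arXiv:2108.02954 — 5 statements merged into one kernel-verified Lean document; each statement's English description precedes it below -/
import Mathlib

section
/- For N independent complex Gaussian factors, the joint characteristic function of the real and imaginary parts of z = ∑_{i=1}^N h_i θ_i g_i, where h_i ~ CN(0, σ_h²) and g_i ~ CN(0, σ_g²) are all independent and θ_i are fixed complex numbers, is Ψ(ω₁,ω₂) = ∏_{i=1}^N (1 + (ω₁²+ω₂²) σ_g² σ_h² |θ_i|² / 4)^{-1}. -/
open Finset

open MeasureTheory Complex Real

lemma integral_complex_split (f g : ℝ → ℂ) :
    ∫ z : ℂ, f z.re * g z.im = (∫ x : ℝ, f x) * ∫ y : ℝ, g y := by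
  rw [← (Complex.volume_preserving_equiv_real_prod.symm).integral_comp
    Complex.measurableEquivRealProd.symm.measurableEmbedding
    (fun z : ℂ => f z.re * g z.im)]
  simp only [Complex.measurableEquivRealProd_symm_apply]
  rw [MeasureTheory.Measure.volume_eq_prod]
  exact integral_prod_mul f g

lemma oneD (σ : ℝ) (hσ : 0 < σ) (t : ℝ) :
    ∫ x : ℝ, Complex.exp (Complex.I * t * x) * (Real.exp (-x ^ 2 / σ ^ 2) : ℂ) =
      ((Real.sqrt (π * σ ^ 2) * Real.exp (-t ^ 2 * σ ^ 2 / 4) : ℝ) : ℂ) := by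
  have hσ2 : (0:ℝ) < σ ^ 2 := by positivity
  have hb : (0:ℝ) < ((1 / σ ^ 2 : ℂ)).re := by
    have : (1 / σ ^ 2 : ℂ) = ((1 / σ ^ 2 : ℝ) : ℂ) := by push_cast; ring
    rw [this, Complex.ofReal_re]
    positivity
  have h1 : ∀ x : ℝ, (Real.exp (-x ^ 2 / σ ^ 2) : ℂ) =
      Complex.exp (-(1 / σ ^ 2 : ℂ) * x ^ 2) := by
    intro x
    have : (-(1 / σ ^ 2 : ℂ) * x ^ 2) = ((-x ^ 2 / σ ^ 2 : ℝ) : ℂ) := by push_cast; ring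
    rw [this, ← Complex.ofReal_exp]
  simp_rw [h1]
  rw [fourierIntegral_gaussian hb t]
  have h2 : (π / (1 / σ ^ 2 : ℂ)) = ((π * σ ^ 2 : ℝ) : ℂ) := by
    push_cast
    field_simp
  rw [h2]
  have h3 : ((π * σ ^ 2 : ℝ) : ℂ) ^ (1 / 2 : ℂ) = ((Real.sqrt (π * σ ^ 2) : ℝ) : ℂ) := by
    rw [Real.sqrt_eq_rpow, Complex.ofReal_cpow (by positivity)]
    norm_num
  rw [h3]
  have h4 : (-(t:ℂ) ^ 2 / (4 * (1 / σ ^ 2 : ℂ))) = ((-t ^ 2 * σ ^ 2 / 4 : ℝ) : ℂ) := by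
    push_cast
    field_simp
  rw [h4, ← Complex.ofReal_exp, ← Complex.ofReal_mul]

lemma charC (σ : ℝ) (hσ : 0 < σ) (a b : ℝ) :
    ∫ z : ℂ, Complex.exp (Complex.I * ((a * z.re + b * z.im : ℝ) : ℂ)) *
        ((Real.exp (-‖z‖ ^ 2 / σ ^ 2) / (π * σ ^ 2) : ℝ) : ℂ)
      = ((Real.exp (-(a ^ 2 + b ^ 2) * σ ^ 2 / 4) : ℝ) : ℂ) := by
  have hπσ : (0:ℝ) < π * σ ^ 2 := by positivity
  have key : ∀ z : ℂ,
      Complex.exp (Complex.I * ((a * z.re + b * z.im : ℝ) : ℂ)) *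
        ((Real.exp (-‖z‖ ^ 2 / σ ^ 2) / (π * σ ^ 2) : ℝ) : ℂ)
      = (Complex.exp (Complex.I * a * z.re) * (Real.exp (-z.re ^ 2 / σ ^ 2) : ℂ)) *
        ((Complex.exp (Complex.I * b * z.im) * (Real.exp (-z.im ^ 2 / σ ^ 2) : ℂ)) *
          (((π * σ ^ 2 : ℝ) : ℂ))⁻¹) := by
    intro z
    have habs : ‖z‖ ^ 2 = z.re ^ 2 + z.im ^ 2 := by
      rw [Complex.sq_norm, Complex.normSq_apply]; ring
    rw [habs]
    rw [show (-(z.re ^ 2 + z.im ^ 2) / σ ^ 2) = (-z.re ^ 2 / σ ^ 2) + (-z.im ^ 2 / σ ^ 2) by ring,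
      Real.exp_add]
    rw [show (Complex.I * ((a * z.re + b * z.im : ℝ) : ℂ)) =
      Complex.I * a * z.re + Complex.I * b * z.im by push_cast; ring, Complex.exp_add]
    push_cast
    ring
  simp_rw [key]
  rw [integral_complex_split (fun x => Complex.exp (Complex.I * a * x) *
      (Real.exp (-x ^ 2 / σ ^ 2) : ℂ))
    (fun y => Complex.exp (Complex.I * b * y) * (Real.exp (-y ^ 2 / σ ^ 2) : ℂ) *
      (((π * σ ^ 2 : ℝ) : ℂ))⁻¹)]
  rw [integral_mul_const, oneD σ hσ a, oneD σ hσ b]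
  rw [← Complex.ofReal_inv, ← Complex.ofReal_mul, ← Complex.ofReal_mul, Complex.ofReal_inj]
  have h5 : Real.sqrt (π * σ ^ 2) * Real.sqrt (π * σ ^ 2) = π * σ ^ 2 :=
    Real.mul_self_sqrt (by positivity)
  rw [show Real.sqrt (π * σ ^ 2) * Real.exp (-a ^ 2 * σ ^ 2 / 4) *
      (Real.sqrt (π * σ ^ 2) * Real.exp (-b ^ 2 * σ ^ 2 / 4) * (π * σ ^ 2)⁻¹) =
      (Real.sqrt (π * σ ^ 2) * Real.sqrt (π * σ ^ 2)) * (π * σ ^ 2)⁻¹ *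
        (Real.exp (-a ^ 2 * σ ^ 2 / 4) * Real.exp (-b ^ 2 * σ ^ 2 / 4)) by ring,
    h5, mul_inv_cancel₀ hπσ.ne', one_mul, ← Real.exp_add]
  ring_nf

lemma gaussC (α : ℝ) (hα : 0 < α) :
    ∫ z : ℂ, (Real.exp (-α * ‖z‖ ^ 2) : ℂ) = ((π / α : ℝ) : ℂ) := by
  have key : ∀ z : ℂ, (Real.exp (-α * ‖z‖ ^ 2) : ℂ) =
      (Real.exp (-α * z.re ^ 2) : ℂ) * (Real.exp (-α * z.im ^ 2) : ℂ) := by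
    intro z
    have habs : ‖z‖ ^ 2 = z.re ^ 2 + z.im ^ 2 := by
      rw [Complex.sq_norm, Complex.normSq_apply]; ring
    rw [habs, ← Complex.ofReal_mul, ← Real.exp_add]
    ring_nf
  simp_rw [key]
  rw [integral_complex_split (fun x => (Real.exp (-α * x ^ 2) : ℂ))
    (fun y => (Real.exp (-α * y ^ 2) : ℂ))]
  have h1 : ∀ x : ℝ, (Real.exp (-α * x ^ 2) : ℂ) = Complex.exp (-(α : ℂ) * x ^ 2) := by
    intro x
    have : (-(α : ℂ) * x ^ 2) = ((-α * x ^ 2 : ℝ) : ℂ) := by push_cast; ring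
    rw [this, ← Complex.ofReal_exp]
  simp_rw [h1]
  rw [integral_gaussian_complex (by simpa using hα)]
  have h2 : ((α : ℂ))⁻¹ = ((α⁻¹ : ℝ) : ℂ) := by push_cast; ring
  have h3 : (π / (α : ℂ)) = ((π / α : ℝ) : ℂ) := by push_cast; ring
  rw [h3]
  have hne : ((π / α : ℝ) : ℂ) ≠ 0 := by
    exact_mod_cast ne_of_gt (show (0:ℝ) < π / α by positivity)
  rw [← Complex.cpow_add _ _ hne]
  norm_num

lemma singleFactor (σh σg : ℝ) (hσh : 0 < σh) (hσg : 0 < σg) (ω₁ ω₂ : ℝ) (θi : ℂ) :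
    (∫ h : ℂ, ∫ g : ℂ,
        Complex.exp (Complex.I * ((ω₁ * (h * θi * g).re + ω₂ * (h * θi * g).im : ℝ) : ℂ)) *
          ((Real.exp (-‖h‖ ^ 2 / σh ^ 2) / (π * σh ^ 2) : ℝ) : ℂ) *
          ((Real.exp (-‖g‖ ^ 2 / σg ^ 2) / (π * σg ^ 2) : ℝ) : ℂ)) =
      (((1 + (ω₁ ^ 2 + ω₂ ^ 2) * σg ^ 2 * σh ^ 2 * ‖θi‖ ^ 2 / 4)⁻¹ : ℝ) : ℂ) := by
  have inner : ∀ h : ℂ, (∫ g : ℂ,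
      Complex.exp (Complex.I * ((ω₁ * (h * θi * g).re + ω₂ * (h * θi * g).im : ℝ) : ℂ)) *
        ((Real.exp (-‖h‖ ^ 2 / σh ^ 2) / (π * σh ^ 2) : ℝ) : ℂ) *
        ((Real.exp (-‖g‖ ^ 2 / σg ^ 2) / (π * σg ^ 2) : ℝ) : ℂ)) =
      ((Real.exp (-((ω₁ ^ 2 + ω₂ ^ 2) * ‖h * θi‖ ^ 2) * σg ^ 2 / 4) : ℝ) : ℂ) *
        ((Real.exp (-‖h‖ ^ 2 / σh ^ 2) / (π * σh ^ 2) : ℝ) : ℂ) := by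
    intro h
    set c : ℂ := h * θi with hc
    set a : ℝ := ω₁ * c.re + ω₂ * c.im with ha
    set b : ℝ := ω₂ * c.re - ω₁ * c.im with hb
    have e1 : ∀ g : ℂ,
        Complex.exp (Complex.I * ((ω₁ * (c * g).re + ω₂ * (c * g).im : ℝ) : ℂ)) *
          ((Real.exp (-‖h‖ ^ 2 / σh ^ 2) / (π * σh ^ 2) : ℝ) : ℂ) *
          ((Real.exp (-‖g‖ ^ 2 / σg ^ 2) / (π * σg ^ 2) : ℝ) : ℂ) =
        (Complex.exp (Complex.I * ((a * g.re + b * g.im : ℝ) : ℂ)) *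
          ((Real.exp (-‖g‖ ^ 2 / σg ^ 2) / (π * σg ^ 2) : ℝ) : ℂ)) *
          ((Real.exp (-‖h‖ ^ 2 / σh ^ 2) / (π * σh ^ 2) : ℝ) : ℂ) := by
      intro g
      have : (ω₁ * (c * g).re + ω₂ * (c * g).im : ℝ) = a * g.re + b * g.im := by
        simp [Complex.mul_re, Complex.mul_im, ha, hb]
        ring
      rw [this]
      ring
    simp_rw [e1]
    rw [integral_mul_const, charC σg hσg a b]
    congr 2
    have habs : ‖c‖ ^ 2 = c.re ^ 2 + c.im ^ 2 := by
      rw [Complex.sq_norm, Complex.normSq_apply]; ring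
    rw [habs, ha, hb]
    ring
  simp_rw [inner]
  set s : ℝ := ω₁ ^ 2 + ω₂ ^ 2 with hs
  have hs0 : 0 ≤ s := by positivity
  set α : ℝ := s * ‖θi‖ ^ 2 * σg ^ 2 / 4 + 1 / σh ^ 2 with hα
  have hα0 : 0 < α := by positivity
  have e2 : ∀ h : ℂ,
      ((Real.exp (-(s * ‖h * θi‖ ^ 2) * σg ^ 2 / 4) : ℝ) : ℂ) *
        ((Real.exp (-‖h‖ ^ 2 / σh ^ 2) / (π * σh ^ 2) : ℝ) : ℂ) =
      ((Real.exp (-α * ‖h‖ ^ 2) : ℝ) : ℂ) * (((π * σh ^ 2)⁻¹ : ℝ) : ℂ) := by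
    intro h
    have hr : Real.exp (-(s * ‖h * θi‖ ^ 2) * σg ^ 2 / 4) *
        (Real.exp (-‖h‖ ^ 2 / σh ^ 2) / (π * σh ^ 2)) =
        Real.exp (-α * ‖h‖ ^ 2) * (π * σh ^ 2)⁻¹ := by
      have hsum : -(s * ‖h * θi‖ ^ 2) * σg ^ 2 / 4 +
          -‖h‖ ^ 2 / σh ^ 2 = -α * ‖h‖ ^ 2 := by
        rw [hα, norm_mul, mul_pow]
        field_simp
        ring
      calc Real.exp (-(s * ‖h * θi‖ ^ 2) * σg ^ 2 / 4) *
            (Real.exp (-‖h‖ ^ 2 / σh ^ 2) / (π * σh ^ 2))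
          = Real.exp (-(s * ‖h * θi‖ ^ 2) * σg ^ 2 / 4 +
              -‖h‖ ^ 2 / σh ^ 2) * (π * σh ^ 2)⁻¹ := by
            rw [Real.exp_add]; ring
        _ = _ := by rw [hsum]
    exact_mod_cast hr
  simp_rw [e2]
  rw [integral_mul_const, gaussC α hα0]
  have hfin : (π / α) * (π * σh ^ 2)⁻¹ =
      (1 + (ω₁ ^ 2 + ω₂ ^ 2) * σg ^ 2 * σh ^ 2 * ‖θi‖ ^ 2 / 4)⁻¹ := by
    have hX : (0:ℝ) < 1 + (ω₁ ^ 2 + ω₂ ^ 2) * σg ^ 2 * σh ^ 2 * ‖θi‖ ^ 2 / 4 := by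
      positivity
    rw [hα, hs]
    field_simp
    ring
  rw [← Complex.ofReal_mul, hfin]

theorem joint_char_fun_product (N : ℕ) (σh σg : ℝ) (hσh : 0 < σh) (hσg : 0 < σg)
    (θ : Fin N → ℂ) (ω₁ ω₂ : ℝ) :
    (∫ h : Fin N → ℂ, ∫ g : Fin N → ℂ,
        Complex.exp (Complex.I *
            ((ω₁ * (∑ i, h i * θ i * g i).re + ω₂ * (∑ i, h i * θ i * g i).im : ℝ) : ℂ)) *
          ((∏ i, Real.exp (-‖h i‖ ^ 2 / σh ^ 2) / (Real.pi * σh ^ 2) : ℝ) : ℂ) *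
          ((∏ i, Real.exp (-‖g i‖ ^ 2 / σg ^ 2) / (Real.pi * σg ^ 2) : ℝ) : ℂ)) =
      ((∏ i, (1 + (ω₁ ^ 2 + ω₂ ^ 2) * σg ^ 2 * σh ^ 2 * ‖θ i‖ ^ 2 / 4)⁻¹ : ℝ) : ℂ) := by
  set F : Fin N → ℂ → ℂ → ℂ := fun i x y =>
    Complex.exp (Complex.I * ((ω₁ * (x * θ i * y).re + ω₂ * (x * θ i * y).im : ℝ) : ℂ)) *
      ((Real.exp (-‖x‖ ^ 2 / σh ^ 2) / (π * σh ^ 2) : ℝ) : ℂ) *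
      ((Real.exp (-‖y‖ ^ 2 / σg ^ 2) / (π * σg ^ 2) : ℝ) : ℂ) with hF
  have key : ∀ (h g : Fin N → ℂ),
      Complex.exp (Complex.I *
          ((ω₁ * (∑ i, h i * θ i * g i).re + ω₂ * (∑ i, h i * θ i * g i).im : ℝ) : ℂ)) *
        ((∏ i, Real.exp (-‖h i‖ ^ 2 / σh ^ 2) / (Real.pi * σh ^ 2) : ℝ) : ℂ) *
        ((∏ i, Real.exp (-‖g i‖ ^ 2 / σg ^ 2) / (Real.pi * σg ^ 2) : ℝ) : ℂ)
      = ∏ i, F i (h i) (g i) := by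
    intro h g
    rw [hF]
    simp only
    rw [Finset.prod_mul_distrib, Finset.prod_mul_distrib]
    congr 1
    · congr 1
      rw [← Complex.exp_sum]
      congr 1
      rw [Complex.re_sum, Complex.im_sum]
      push_cast
      rw [Finset.mul_sum, Finset.mul_sum, ← Finset.sum_add_distrib, Finset.mul_sum]
      rw [Complex.ofReal_prod]
    · rw [Complex.ofReal_prod]
  simp_rw [key]
  have h1 : ∀ hv : Fin N → ℂ, ∫ g : Fin N → ℂ, ∏ i, F i (hv i) (g i) =
      ∏ i, ∫ y : ℂ, F i (hv i) y :=
    fun hv => MeasureTheory.integral_fintype_prod_eq_prod (fun i y => F i (hv i) y)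
  simp_rw [h1]
  rw [show (∫ h : Fin N → ℂ, ∏ i, ∫ y : ℂ, F i (h i) y) = ∏ i, ∫ x : ℂ, ∫ y : ℂ, F i x y from
    MeasureTheory.integral_fintype_prod_eq_prod (fun i x => ∫ y : ℂ, F i x y)]
  rw [Complex.ofReal_prod]
  exact Finset.prod_congr rfl fun i _ => singleFactor σh σg hσh hσg ω₁ ω₂ (θ i)
end

section
/- For c > 0, the function p(r) = r ∑_{i=1}^N Cᵢ K₀(2r/(c|θᵢ|)) with Cᵢ and aᵢ = c²|θᵢ|²/4 as in the partial-fraction decomposition (θᵢ having pairwise distinct nonzero moduli) is a probability density on (0,∞), i.e., ∫_0^∞ r ∑_i Cᵢ K₀(2r/(c|θᵢ|)) dr = 1. -/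
open Finset

/-- The modified Bessel function of the second kind `K_ν(x)` (for `x > 0`),
via its integral representation. -/
noncomputable def besselK (ν x : ℝ) : ℝ :=
  ∫ t in Set.Ioi (0 : ℝ), Real.exp (-x * Real.cosh t) * Real.cosh (ν * t)

open Polynomial MeasureTheory Real Set Filter


lemma lagrange_sum_eq_one {F : Type*} [Field F] {ι : Type*} [DecidableEq ι]
    (s : Finset ι) (v : ι → F) (hvs : Set.InjOn v s) (hs : s.Nonempty) :
    ∑ i ∈ s, v i ^ (s.card - 1) / ∏ j ∈ s.erase i, (v i - v j) = 1 := by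
  set n := s.card with hn
  have hn1 : 1 ≤ n := Finset.card_pos.mpr hs
  have hdeg : (X ^ (n - 1) : F[X]).degree < (s.card : ℕ) := by
    rw [degree_X_pow]
    exact_mod_cast Nat.sub_lt_of_pos_le one_pos hn1
  have h := Lagrange.eq_interpolate (f := (X ^ (n - 1) : F[X])) hvs hdeg
  have hcoeff := congrArg (fun p => Polynomial.coeff p (n - 1)) h
  simp only [coeff_X_pow, if_pos rfl, Lagrange.interpolate_apply, finset_sum_coeff,
    coeff_C_mul] at hcoeff
  rw [if_pos trivial] at hcoeff
  rw [hcoeff]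
  refine Finset.sum_congr rfl fun i hi => ?_
  have hb : (Lagrange.basis s v i).coeff (n - 1) = (∏ j ∈ s.erase i, (v i - v j))⁻¹ := by
    have hnd : (Lagrange.basis s v i).natDegree = n - 1 := Lagrange.natDegree_basis hvs hi
    rw [← hnd, ← Polynomial.leadingCoeff]
    rw [Lagrange.basis, Polynomial.leadingCoeff_prod, ← Finset.prod_inv_distrib]
    refine Finset.prod_congr rfl fun j hj => ?_
    have hne : v i ≠ v j := by
      have hji : j ≠ i := Finset.ne_of_mem_erase hj
      exact fun h => hji (hvs (Finset.mem_of_mem_erase hj) hi h.symm)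
    rw [Lagrange.basisDivisor, leadingCoeff_mul, leadingCoeff_C, leadingCoeff_X_sub_C, mul_one]
  rw [hb, eval_pow, eval_X, div_eq_mul_inv]

lemma besselK_zero_eq (x : ℝ) : besselK 0 x = ∫ t in Set.Ioi (0:ℝ), Real.exp (-x * Real.cosh t) := by
  simp [besselK]

-- tanh derivative
lemma hasDerivAt_tanh' (x : ℝ) :
    HasDerivAt (fun x => Real.sinh x / Real.cosh x) ((Real.cosh x ^ 2)⁻¹) x := by
  have h := (Real.hasDerivAt_sinh x).div (Real.hasDerivAt_cosh x) (ne_of_gt (Real.cosh_pos x))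
  have := Real.cosh_sq_sub_sinh_sq x
  rw [show (Real.cosh x ^ 2)⁻¹ = (Real.cosh x * Real.cosh x - Real.sinh x * Real.sinh x) / Real.cosh x ^ 2 by
    rw [inv_eq_one_div]; congr 1
    linarith]
  exact h

lemma tendsto_tanh' : Tendsto (fun x => Real.sinh x / Real.cosh x) atTop (nhds 1) := by
  have key : ∀ x : ℝ, Real.sinh x / Real.cosh x
      = (1 - Real.exp (-2 * x)) / (1 + Real.exp (-2 * x)) := by
    intro x
    rw [Real.sinh_eq, Real.cosh_eq]
    have h1 : Real.exp x ≠ 0 := Real.exp_ne_zero x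
    have h2 : Real.exp (-2 * x) = Real.exp (-x) * Real.exp (-x) := by
      rw [← Real.exp_add]; ring_nf
    have h3 : Real.exp x * Real.exp (-x) = 1 := by rw [← Real.exp_add]; simp
    have hpos : 0 < 1 + Real.exp (-2 * x) := by positivity
    have hpos2 : (0:ℝ) < (Real.exp x + Real.exp (-x)) / 2 := by positivity
    rw [div_eq_div_iff (ne_of_gt hpos2) (ne_of_gt hpos), h2]
    nlinarith [Real.exp_pos (-x)]
  simp_rw [key]
  have h0 : Tendsto (fun x : ℝ => Real.exp (-2 * x)) atTop (nhds 0) := by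
    apply Real.tendsto_exp_atBot.comp
    exact tendsto_id.const_mul_atTop_of_neg (by norm_num)
  have h1 : Tendsto (fun x : ℝ => 1 - Real.exp (-2 * x)) atTop (nhds (1 - 0)) :=
    tendsto_const_nhds.sub h0
  have h2 : Tendsto (fun x : ℝ => 1 + Real.exp (-2 * x)) atTop (nhds (1 + 0)) :=
    tendsto_const_nhds.add h0
  have := h1.div h2 (by norm_num)
  simpa [Pi.div_def] using this

lemma integral_inv_cosh_sq : ∫ t in Set.Ioi (0:ℝ), (Real.cosh t ^ 2)⁻¹ = 1 := by
  have h := integral_Ioi_of_hasDerivAt_of_nonneg' (a := (0:ℝ))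
    (g := fun x => Real.sinh x / Real.cosh x) (g' := fun x => (Real.cosh x ^ 2)⁻¹)
    (fun x _ => hasDerivAt_tanh' x) (fun x _ => by positivity) tendsto_tanh'
  simpa using h

lemma integrableOn_inv_cosh_sq : IntegrableOn (fun t => (Real.cosh t ^ 2)⁻¹) (Set.Ioi (0:ℝ)) :=
  integrableOn_Ioi_deriv_of_nonneg' (fun x _ => hasDerivAt_tanh' x)
    (fun x _ => by positivity) tendsto_tanh'

-- ∫ r exp(-b r) over Ioi 0 = (b^2)⁻¹
lemma integral_id_mul_exp (b : ℝ) (hb : 0 < b) :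
    ∫ r in Set.Ioi (0:ℝ), r * Real.exp (-(b * r)) = (b ^ 2)⁻¹ := by
  have h := Real.integral_rpow_mul_exp_neg_mul_Ioi (a := 2) (r := b) two_pos hb
  rw [show ∫ t in Set.Ioi (0:ℝ), t ^ ((2:ℝ) - 1) * Real.exp (-(b * t))
      = ∫ r in Set.Ioi (0:ℝ), r * Real.exp (-(b * r)) from ?_] at h
  · rw [h, Real.Gamma_two]
    rw [div_rpow one_pos.le hb.le, Real.one_rpow, Real.rpow_two]
    field_simp
  · refine setIntegral_congr_fun measurableSet_Ioi (fun t ht => ?_)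
    norm_num

lemma integrableOn_id_mul_exp (b : ℝ) (hb : 0 < b) :
    IntegrableOn (fun r => r * Real.exp (-(b * r))) (Set.Ioi (0:ℝ)) := by
  have h := integrableOn_rpow_mul_exp_neg_mul_rpow (s := 1) (p := 1) (b := b)
    (by norm_num) one_pos hb
  refine h.congr_fun (fun x hx => ?_) measurableSet_Ioi
  simp [Real.rpow_one]

section moment
variable {α : ℝ} (hα : 0 < α)

private noncomputable def Fk (α : ℝ) : ℝ → ℝ → ℝ := fun r t => r * Real.exp (-(α * Real.cosh t * r))

lemma Fk_integrable (hα : 0 < α) : Integrable (Function.uncurry (Fk α))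
    ((volume.restrict (Set.Ioi (0:ℝ))).prod (volume.restrict (Set.Ioi (0:ℝ)))) := by
  have hmeas : AEStronglyMeasurable (Function.uncurry (Fk α))
      ((volume.restrict (Set.Ioi (0:ℝ))).prod (volume.restrict (Set.Ioi (0:ℝ)))) := by
    apply Continuous.aestronglyMeasurable
    unfold Fk Function.uncurry
    fun_prop
  rw [integrable_prod_iff' hmeas]
  constructor
  · refine Eventually.of_forall (fun t => ?_)
    have hb : 0 < α * Real.cosh t := by positivity
    simp only [Function.uncurry, Fk]
    exact integrableOn_id_mul_exp _ hb
  · have heq : ∀ t : ℝ, (∫ r in Set.Ioi (0:ℝ), ‖Fk α r t‖)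
        = (α^2)⁻¹ * (Real.cosh t ^ 2)⁻¹ := by
      intro t
      have hb : 0 < α * Real.cosh t := by positivity
      have : (∫ r in Set.Ioi (0:ℝ), ‖Fk α r t‖)
          = ∫ r in Set.Ioi (0:ℝ), r * Real.exp (-(α * Real.cosh t * r)) := by
        refine setIntegral_congr_fun measurableSet_Ioi (fun r hr => ?_)
        have : 0 ≤ Fk α r t := mul_nonneg (le_of_lt hr) (Real.exp_pos _).le
        rw [Real.norm_eq_abs, abs_of_nonneg this]; rfl
      rw [this, integral_id_mul_exp _ hb, mul_pow, mul_inv]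
    refine Integrable.congr ?_ (Eventually.of_forall fun t => (heq t).symm)
    exact integrableOn_inv_cosh_sq.const_mul _
  
lemma mul_besselK_eq (hα : 0 < α) (r : ℝ) :
    r * besselK 0 (α * r) = ∫ t in Set.Ioi (0:ℝ), Fk α r t := by
  rw [besselK_zero_eq, ← integral_const_mul]
  refine setIntegral_congr_fun measurableSet_Ioi (fun t ht => ?_)
  unfold Fk
  ring_nf

lemma integrableOn_mul_besselK (hα : 0 < α) :
    IntegrableOn (fun r => r * besselK 0 (α * r)) (Set.Ioi (0:ℝ)) := by
  have h := (Fk_integrable hα).integral_prod_left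
  exact h.congr (Eventually.of_forall fun r => (mul_besselK_eq hα r).symm)

lemma integral_mul_besselK (hα : 0 < α) :
    ∫ r in Set.Ioi (0:ℝ), r * besselK 0 (α * r) = (α ^ 2)⁻¹ := by
  have h1 : ∫ r in Set.Ioi (0:ℝ), r * besselK 0 (α * r)
      = ∫ r in Set.Ioi (0:ℝ), ∫ t in Set.Ioi (0:ℝ), Fk α r t :=
    setIntegral_congr_fun measurableSet_Ioi (fun r _ => mul_besselK_eq hα r)
  rw [h1, integral_integral_swap (Fk_integrable hα)]
  have h2 : ∀ t : ℝ, (∫ r in Set.Ioi (0:ℝ), Fk α r t) = (α^2)⁻¹ * (Real.cosh t ^ 2)⁻¹ := by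
    intro t
    have hb : 0 < α * Real.cosh t := by positivity
    rw [show (fun r => Fk α r t) = fun r => r * Real.exp (-(α * Real.cosh t * r)) from rfl]
    rw [integral_id_mul_exp _ hb, mul_pow, mul_inv]
  rw [setIntegral_congr_fun measurableSet_Ioi (fun t _ => h2 t), integral_const_mul,
    integral_inv_cosh_sq, mul_one]

end moment


theorem cascade_channel_pdf_integrates_to_one (N : ℕ) (hN : 2 ≤ N) (c : ℝ) (hc : 0 < c)
    (θ : Fin N → ℂ) (hθ0 : ∀ i, ‖θ i‖ ≠ 0)
    (hdist : ∀ i j, i ≠ j → ‖θ i‖ ≠ ‖θ j‖) :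
    (∫ r in Set.Ioi (0 : ℝ),
        r * ∑ i,
          ((c ^ 2 * ‖θ i‖ ^ 2 / 4) ^ (N - 2) /
              ∏ j ∈ Finset.univ.erase i,
                (c ^ 2 * ‖θ i‖ ^ 2 / 4 - c ^ 2 * ‖θ j‖ ^ 2 / 4)) *
            besselK 0 (2 * r / (c * ‖θ i‖))) = 1 := by
  have hb : ∀ i, 0 < ‖θ i‖ := fun i => lt_of_le_of_ne (norm_nonneg _)
    (Ne.symm (hθ0 i))
  set a : Fin N → ℝ := fun i => c ^ 2 * ‖θ i‖ ^ 2 / 4 with ha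
  set C : Fin N → ℝ := fun i => a i ^ (N - 2) / ∏ j ∈ Finset.univ.erase i, (a i - a j) with hC
  set α : Fin N → ℝ := fun i => 2 / (c * ‖θ i‖) with hα
  have hαpos : ∀ i, 0 < α i := fun i => by
    have := hb i; rw [hα]; positivity
  have step1 : (∫ r in Set.Ioi (0 : ℝ),
        r * ∑ i, C i * besselK 0 (2 * r / (c * ‖θ i‖)))
      = ∫ r in Set.Ioi (0 : ℝ), ∑ i, C i * (r * besselK 0 (α i * r)) := by
    refine setIntegral_congr_fun measurableSet_Ioi (fun r _ => ?_)
    rw [Finset.mul_sum]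
    refine Finset.sum_congr rfl fun i _ => ?_
    have harg : 2 * r / (c * ‖θ i‖) = α i * r := by
      rw [hα]; ring
    rw [harg]; ring
  rw [step1, integral_finset_sum _ (fun i _ => ((integrableOn_mul_besselK (hαpos i)).const_mul _))]
  have step2 : ∀ i : Fin N, (∫ r in Set.Ioi (0:ℝ), C i * (r * besselK 0 (α i * r)))
      = C i * a i := by
    intro i
    rw [integral_const_mul, integral_mul_besselK (hαpos i)]
    congr 1
    rw [hα, ha]
    rw [div_pow, inv_div]
    have := hb i
    field_simp
    ring
  rw [Finset.sum_congr rfl (fun i _ => step2 i)]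
  -- Lagrange identity
  have hinj : Set.InjOn a (Finset.univ : Finset (Fin N)) := by
    intro i _ j _ hij
    by_contra hne
    apply hdist i j hne
    rw [ha] at hij
    simp only at hij
    have h2 : ‖θ i‖ ^ 2 = ‖θ j‖ ^ 2 := by
      have hc2 : c ^ 2 ≠ 0 := by positivity
      have := mul_left_cancel₀ hc2 (by linarith : c ^ 2 * ‖θ i‖ ^ 2
        = c ^ 2 * ‖θ j‖ ^ 2)
      exact this
    exact (sq_eq_sq₀ (norm_nonneg _) (norm_nonneg _)).mp h2
  have hne : (Finset.univ : Finset (Fin N)).Nonempty := by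
    have : 0 < N := by omega
    exact ⟨⟨0, this⟩, Finset.mem_univ _⟩
  have hlag := lagrange_sum_eq_one (Finset.univ : Finset (Fin N)) a hinj hne
  rw [Finset.card_univ, Fintype.card_fin] at hlag
  rw [← hlag]
  refine Finset.sum_congr rfl fun i _ => ?_
  rw [hC, div_mul_eq_mul_div, ← pow_succ]
  congr 2
  omega
end

section
/- The function p(r) = 4 r^N / (Γ(N) b^{N+1}) · K_{N−1}(2r/b), for b > 0 and integer N ≥ 1, is a probability density on (0, ∞): it is nonnegative and integrates to 1. -/
open MeasureTheory Real Set Filter Topology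


lemma pow_exp_integrable (n : ℕ) {a : ℝ} (ha : 0 < a) :
    IntegrableOn (fun r : ℝ => r ^ n * Real.exp (-(a * r))) (Set.Ioi 0) := by
  have h := integrableOn_rpow_mul_exp_neg_mul_rpow (p := 1) (s := n) (b := a)
    (lt_of_lt_of_le neg_one_lt_zero (Nat.cast_nonneg n)) one_pos ha
  refine h.congr_fun (fun x hx => ?_) measurableSet_Ioi
  beta_reduce
  rw [Real.rpow_natCast, Real.rpow_one]
  ring_nf

lemma pow_exp_integral (n : ℕ) {a : ℝ} (ha : 0 < a) :
    ∫ r in Set.Ioi (0:ℝ), r ^ n * Real.exp (-(a * r)) = (Nat.factorial n : ℝ) / a ^ (n + 1) := by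
  have h := Real.integral_rpow_mul_exp_neg_mul_Ioi (a := (n + 1 : ℝ)) (r := a)
    (by positivity) ha
  rw [show ((n:ℝ) + 1 - 1) = (n : ℝ) by ring] at h
  rw [show ∫ r in Set.Ioi (0:ℝ), r ^ n * Real.exp (-(a * r))
      = ∫ t in Set.Ioi (0:ℝ), t ^ (n : ℝ) * Real.exp (-(a * t)) by
    refine setIntegral_congr_fun measurableSet_Ioi (fun x hx => ?_)
    rw [Real.rpow_natCast]]
  rw [h]
  rw [show ((n : ℝ) + 1) = ((n + 1 : ℕ) : ℝ) by push_cast; ring, Real.rpow_natCast]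
  rw [show ((n + 1 : ℕ) : ℝ) = (n : ℝ) + 1 by push_cast; ring, Real.Gamma_nat_eq_factorial]
  field_simp
  rw [← mul_pow, one_div, inv_mul_cancel₀ ha.ne', one_pow]


lemma coshRatio_hasDeriv (M : ℕ) (t : ℝ) :
    HasDerivAt (fun t : ℝ => (2:ℝ)^M / (M+1) *
      ((1 - Real.exp (-(2*(M+1)*t))) / (1 + Real.exp (-(2*t)))^(M+1)))
      (Real.cosh (M*t) / Real.cosh t ^ (M+2)) t := by
  have hc1 : HasDerivAt (fun t : ℝ => -(2*((M:ℝ)+1)*t)) (-(2*((M:ℝ)+1))) t := by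
    have := ((hasDerivAt_id t).const_mul (2*((M:ℝ)+1))).neg
    rw [mul_one] at this; exact this
  have hc2 : HasDerivAt (fun t : ℝ => -(2*t)) (-2 : ℝ) t := by
    have := ((hasDerivAt_id t).const_mul (2:ℝ)).neg
    rw [mul_one] at this; exact this
  have hu : HasDerivAt (fun t : ℝ => 1 - Real.exp (-(2*((M:ℝ)+1)*t)))
      (-(Real.exp (-(2*((M:ℝ)+1)*t)) * (-(2*((M:ℝ)+1))))) t := by
    have := (hasDerivAt_const t 1).sub hc1.exp
    rw [zero_sub] at this; exact this
  have hv : HasDerivAt (fun t : ℝ => (1 + Real.exp (-(2*t)))^(M+1))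
      (((M:ℝ)+1) * (1 + Real.exp (-(2*t)))^(M+1-1) * (Real.exp (-(2*t)) * (-2))) t := by
    have := ((hasDerivAt_const t 1).add hc2.exp).pow (M+1)
    rw [zero_add, Nat.cast_add_one] at this; exact this
  have hvne : ((1:ℝ) + Real.exp (-(2*t)))^(M+1) ≠ 0 := by positivity
  have hq := (hu.div hv hvne).const_mul ((2:ℝ)^M / (M+1))
  refine hq.congr_deriv ?_
  symm
  have hE : (0:ℝ) < Real.exp t := Real.exp_pos t
  have hch : (0:ℝ) < Real.cosh t := Real.cosh_pos t
  rw [Real.cosh_eq, Real.cosh_eq]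
  have e1 : Real.exp ((M:ℝ)*t) = Real.exp t ^ M := by
    rw [← Real.exp_nat_mul]
  have e2 : Real.exp (-((M:ℝ)*t)) = (Real.exp t ^ M)⁻¹ := by
    rw [Real.exp_neg, e1]
  have e3 : Real.exp (-(2*((M:ℝ)+1)*t)) = (Real.exp t ^ (2*(M+1)))⁻¹ := by
    rw [show (2*((M:ℝ)+1)*t) = ((2*(M+1) : ℕ) : ℝ) * t by push_cast; ring,
      Real.exp_neg, Real.exp_nat_mul]
  have e4 : Real.exp (-(2*t)) = (Real.exp t ^ 2)⁻¹ := by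
    rw [show (2*t) = ((2:ℕ):ℝ)*t by push_cast; ring, Real.exp_neg, Real.exp_nat_mul]
  have e5 : Real.exp (-t) = (Real.exp t)⁻¹ := Real.exp_neg t
  rw [e1, e2, e3, e4, e5]
  have hM1 : ((M:ℝ)+1) ≠ 0 := by positivity
  have h1 : ((1:ℝ) + (Real.exp t ^ 2)⁻¹) ≠ 0 := by positivity
  have hEM : (Real.exp t ^ M) ≠ 0 := by positivity
  have hE' : Real.exp t ≠ 0 := ne_of_gt hE
  have hsum : Real.exp t + (Real.exp t)⁻¹ ≠ 0 := by positivity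
  simp only [Nat.add_sub_cancel]
  field_simp
  simp only [div_pow]
  field_simp
  ring


lemma exp_neg_mul_tendsto {c : ℝ} (hc : 0 < c) :
    Tendsto (fun t : ℝ => Real.exp (-(c*t))) atTop (𝓝 0) := by
  have h1 : Tendsto (fun t : ℝ => c * t) atTop atTop :=
    Tendsto.const_mul_atTop hc tendsto_id
  have h2 : Tendsto (fun t : ℝ => -(c*t)) atTop atBot := tendsto_neg_atTop_atBot.comp h1
  exact Real.tendsto_exp_atBot.comp h2

lemma coshRatio_tendsto (M : ℕ) :
    Tendsto (fun t : ℝ => (2:ℝ)^M / (M+1) *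
      ((1 - Real.exp (-(2*(M+1)*t))) / (1 + Real.exp (-(2*t)))^(M+1)))
      atTop (𝓝 ((2:ℝ)^M / (M+1))) := by
  have h1 : Tendsto (fun t : ℝ => Real.exp (-(2*((M:ℝ)+1)*t))) atTop (𝓝 0) := by
    have := exp_neg_mul_tendsto (c := 2*((M:ℝ)+1)) (by positivity)
    simpa [mul_assoc] using this
  have h2 : Tendsto (fun t : ℝ => Real.exp (-(2*t))) atTop (𝓝 0) :=
    exp_neg_mul_tendsto (by norm_num)
  have := (((tendsto_const_nhds (x := (1:ℝ))).sub h1).div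
    (((tendsto_const_nhds (x := (1:ℝ))).add h2).pow (M+1)) (by norm_num)).const_mul
    ((2:ℝ)^M / (M+1))
  simpa using this

lemma coshRatio_integrable (M : ℕ) :
    IntegrableOn (fun t : ℝ => Real.cosh (M*t) / Real.cosh t ^ (M+2)) (Set.Ioi 0) := by
  refine integrableOn_Ioi_deriv_of_nonneg' (fun x _ => coshRatio_hasDeriv M x)
    (fun x _ => by positivity) (coshRatio_tendsto M)

lemma coshRatio_integral (M : ℕ) :
    ∫ t in Set.Ioi (0:ℝ), Real.cosh (M*t) / Real.cosh t ^ (M+2) = 2^M / (M+1) := by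
  rw [integral_Ioi_of_hasDerivAt_of_nonneg' (fun x _ => coshRatio_hasDeriv M x)
    (fun x _ => by positivity) (coshRatio_tendsto M)]
  simp

theorem nakagami_like_density (N : ℕ) (hN : 1 ≤ N) (b : ℝ) (hb : 0 < b) :
    (∀ r ∈ Set.Ioi (0 : ℝ),
        0 ≤ 4 * r ^ N / (Real.Gamma N * b ^ (N + 1)) * besselK ((N : ℝ) - 1) (2 * r / b)) ∧
      ∫ r in Set.Ioi (0 : ℝ),
          4 * r ^ N / (Real.Gamma N * b ^ (N + 1)) * besselK ((N : ℝ) - 1) (2 * r / b) = 1 := by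
  obtain ⟨M, rfl⟩ : ∃ M, N = M + 1 := ⟨N - 1, (Nat.succ_pred_eq_of_pos hN).symm⟩
  have hKnn : ∀ ν x : ℝ, 0 ≤ besselK ν x := fun ν x =>
    setIntegral_nonneg measurableSet_Ioi fun t _ =>
      mul_nonneg (Real.exp_nonneg _) (Real.cosh_pos _).le
  have hΓpos : 0 < Real.Gamma ((M + 1 : ℕ) : ℝ) := Real.Gamma_pos_of_pos (by positivity)
  constructor
  · intro r hr
    have hr' : 0 < r := hr
    have h1 : 0 ≤ 4 * r ^ (M+1) / (Real.Gamma ((M+1:ℕ):ℝ) * b ^ (M + 1 + 1)) := by positivity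
    exact mul_nonneg h1 (hKnn _ _)
  -- the integral part
  have hν : ((M + 1 : ℕ) : ℝ) - 1 = (M : ℝ) := by push_cast; ring
  rw [hν]
  have hΓ : Real.Gamma ((M + 1 : ℕ) : ℝ) = (Nat.factorial M : ℝ) := by
    rw [show ((M + 1 : ℕ) : ℝ) = (M : ℝ) + 1 by push_cast; ring, Real.Gamma_nat_eq_factorial]
  rw [hΓ]
  have hMfac : (0:ℝ) < (Nat.factorial M : ℝ) := by exact_mod_cast Nat.factorial_pos M
  -- inner function
  set ψ : ℝ → ℝ → ℝ := fun r t =>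
    r ^ (M+1) * (Real.exp (-(2*r/b) * Real.cosh t) * Real.cosh ((M:ℝ) * t)) with hψ
  have hψcont : Continuous (fun p : ℝ × ℝ => ψ p.1 p.2) := by
    unfold ψ; fun_prop
  have hψm : Measurable (fun p : ℝ × ℝ => ENNReal.ofReal (ψ p.1 p.2)) :=
    hψcont.measurable.ennreal_ofReal
  -- Step 1: inner r-integral for fixed t
  have hinner : ∀ t ∈ Set.Ioi (0:ℝ),
      (∫⁻ r in Set.Ioi (0:ℝ), ENNReal.ofReal (ψ r t)) =
        ENNReal.ofReal (((Nat.factorial (M+1) : ℝ) * (b/2)^(M+2)) *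
          (Real.cosh ((M:ℝ)*t) / Real.cosh t ^ (M+2))) := by
    intro t _
    have hch : 0 < Real.cosh t := Real.cosh_pos t
    set a : ℝ := 2 * Real.cosh t / b with ha
    have hapos : 0 < a := by positivity
    have hcongr : ∀ r : ℝ, ψ r t =
        Real.cosh ((M:ℝ)*t) * (r^(M+1) * Real.exp (-(a*r))) := by
      intro r
      have hbne : b ≠ 0 := hb.ne'
      have : -(2*r/b) * Real.cosh t = -(a*r) := by rw [ha]; ring
      rw [hψ]; dsimp only; rw [this]; ring
    simp_rw [hcongr]
    rw [← ofReal_integral_eq_lintegral_ofReal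
      (((pow_exp_integrable (M+1) hapos)).const_mul _)
      ((ae_restrict_iff' measurableSet_Ioi).2 (Filter.Eventually.of_forall fun r hr => by
        have : (0:ℝ) < r := hr
        positivity))]
    rw [MeasureTheory.integral_const_mul, pow_exp_integral (M+1) hapos]
    congr 1
    rw [ha]
    have hcMnn : 0 ≤ Real.cosh ((M:ℝ)*t) := (Real.cosh_pos _).le
    field_simp
    have hbne : b ≠ 0 := hb.ne'
    simp only [div_pow]
    field_simp
    ring
  -- Step 2: outer t-integral
  have houter : (∫⁻ t in Set.Ioi (0:ℝ), ENNReal.ofReal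
        (((Nat.factorial (M+1) : ℝ) * (b/2)^(M+2)) *
          (Real.cosh ((M:ℝ)*t) / Real.cosh t ^ (M+2)))) =
      ENNReal.ofReal ((Nat.factorial M : ℝ) * b^(M+2) / 4) := by
    rw [← ofReal_integral_eq_lintegral_ofReal ((coshRatio_integrable M).const_mul _)
      (Filter.Eventually.of_forall fun t => by positivity)]
    rw [MeasureTheory.integral_const_mul, coshRatio_integral M]
    congr 1
    rw [show (Nat.factorial (M+1) : ℝ) = ((M:ℝ)+1) * (Nat.factorial M : ℝ) by
      rw [Nat.factorial_succ]; push_cast; ring]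
    have : ((M:ℝ)+1) ≠ 0 := by positivity
    field_simp
    simp only [div_pow]
    field_simp
    ring
  -- Step 3: swap
  have hswap : (∫⁻ r in Set.Ioi (0:ℝ), ∫⁻ t in Set.Ioi (0:ℝ), ENNReal.ofReal (ψ r t)) =
      ∫⁻ t in Set.Ioi (0:ℝ), ∫⁻ r in Set.Ioi (0:ℝ), ENNReal.ofReal (ψ r t) :=
    lintegral_lintegral_swap hψm.aemeasurable
  have hA : (∫⁻ r in Set.Ioi (0:ℝ), ∫⁻ t in Set.Ioi (0:ℝ), ENNReal.ofReal (ψ r t)) =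
      ENNReal.ofReal ((Nat.factorial M : ℝ) * b^(M+2) / 4) := by
    rw [hswap, setLIntegral_congr_fun measurableSet_Ioi
      hinner, houter]
  -- Step 4: a.e. finiteness of inner lintegral
  have hinnm : Measurable (fun r : ℝ => ∫⁻ t in Set.Ioi (0:ℝ), ENNReal.ofReal (ψ r t)) :=
    Measurable.lintegral_prod_right' hψm
  have hfin : ∀ᵐ r ∂(volume.restrict (Set.Ioi (0:ℝ))),
      (∫⁻ t in Set.Ioi (0:ℝ), ENNReal.ofReal (ψ r t)) < ⊤ :=
    ae_lt_top hinnm (by rw [hA]; exact ENNReal.ofReal_ne_top)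
  -- Step 5: pointwise identification with besselK
  have hKr : ∀ᵐ r ∂(volume.restrict (Set.Ioi (0:ℝ))),
      ENNReal.ofReal (r ^ (M+1) * besselK (M:ℝ) (2*r/b)) =
        ∫⁻ t in Set.Ioi (0:ℝ), ENNReal.ofReal (ψ r t) := by
    filter_upwards [hfin, ae_restrict_mem measurableSet_Ioi] with r hfr hr
    have hrpos : (0:ℝ) < r := hr
    have hrpow : (0:ℝ) ≤ r ^ (M+1) := by positivity
    have hL' : (∫⁻ t in Set.Ioi (0:ℝ), ENNReal.ofReal (ψ r t)) =
        ENNReal.ofReal (r ^ (M+1)) *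
          ∫⁻ t in Set.Ioi (0:ℝ), ENNReal.ofReal
            (Real.exp (-(2*r/b) * Real.cosh t) * Real.cosh ((M:ℝ) * t)) := by
      simp_rw [hψ, ENNReal.ofReal_mul hrpow]
      rw [lintegral_const_mul' _ _ ENNReal.ofReal_ne_top]
    have hLfin : (∫⁻ t in Set.Ioi (0:ℝ), ENNReal.ofReal
        (Real.exp (-(2*r/b) * Real.cosh t) * Real.cosh ((M:ℝ) * t))) ≠ ⊤ := by
      intro hcontra
      rw [hL', hcontra, ENNReal.mul_top (by
        simp [ENNReal.ofReal_eq_zero]; positivity)] at hfr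
      exact (lt_irrefl _ hfr)
    have hKval : besselK (M:ℝ) (2*r/b) = (∫⁻ t in Set.Ioi (0:ℝ), ENNReal.ofReal
        (Real.exp (-(2*r/b) * Real.cosh t) * Real.cosh ((M:ℝ) * t))).toReal := by
      rw [besselK]
      exact integral_eq_lintegral_of_nonneg_ae
        (Filter.Eventually.of_forall fun t => by positivity)
        ((by fun_prop : Continuous fun t : ℝ =>
          Real.exp (-(2*r/b) * Real.cosh t) * Real.cosh ((M:ℝ)*t)).aestronglyMeasurable)
    rw [hKval, hL', ENNReal.ofReal_mul hrpow, ENNReal.ofReal_toReal hLfin]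
  -- Step 6: compute the target
  have hsm : AEStronglyMeasurable (fun r : ℝ => r ^ (M+1) * besselK (M:ℝ) (2*r/b))
      (volume.restrict (Set.Ioi (0:ℝ))) := by
    have hcont : Continuous (fun p : ℝ × ℝ =>
        Real.exp (-p.1 * Real.cosh p.2) * Real.cosh ((M:ℝ) * p.2)) := by fun_prop
    have h1 : StronglyMeasurable (fun x : ℝ => ∫ t in Set.Ioi (0:ℝ),
        Real.exp (-x * Real.cosh t) * Real.cosh ((M:ℝ) * t)) :=
      hcont.stronglyMeasurable.integral_prod_right'
    have h2 : (fun r : ℝ => besselK (M:ℝ) (2*r/b)) =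
        (fun x : ℝ => ∫ t in Set.Ioi (0:ℝ),
          Real.exp (-x * Real.cosh t) * Real.cosh ((M:ℝ) * t)) ∘ (fun r => 2*r/b) := rfl
    refine AEStronglyMeasurable.mul ?_ ?_
    · exact (measurable_id.pow_const (M+1)).aestronglyMeasurable
    · rw [h2]
      exact (h1.comp_measurable (by fun_prop)).aestronglyMeasurable
  have hT : ∫ r in Set.Ioi (0:ℝ), r ^ (M+1) * besselK (M:ℝ) (2*r/b) =
      (Nat.factorial M : ℝ) * b^(M+2) / 4 := by
    rw [integral_eq_lintegral_of_nonneg_ae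
      ((ae_restrict_iff' measurableSet_Ioi).2 (Filter.Eventually.of_forall fun r hr => by
        have : (0:ℝ) < r := hr
        exact mul_nonneg (by positivity) (hKnn _ _))) hsm]
    rw [lintegral_congr_ae hKr, hA, ENNReal.toReal_ofReal (by positivity)]
  have hsplit : ∀ r : ℝ, 4 * r ^ (M+1) / ((Nat.factorial M : ℝ) * b ^ (M+1+1)) *
      besselK (M:ℝ) (2*r/b) =
      (4 / ((Nat.factorial M : ℝ) * b ^ (M+2))) * (r ^ (M+1) * besselK (M:ℝ) (2*r/b)) := by
    intro r
    rw [show M+1+1 = M+2 from rfl]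
    ring
  simp_rw [hsplit]
  rw [MeasureTheory.integral_const_mul, hT]
  have hbne : b ≠ 0 := hb.ne'
  have hfne : (Nat.factorial M : ℝ) ≠ 0 := hMfac.ne'
  field_simp
end

section
/- If R has density p_R(R) = R^{(N−1)/2}/(Γ(N) b^{N+1}) · 2 K_{N−1}(2√R/b) on (0,∞) with b = 1 (the squared modulus of the sum of N products of standard complex Gaussians), then its CDF satisfies P(R < γ) = 1 − (2 γ^{N/2} / Γ(N)) K_N(2√γ) for γ > 0. -/
open MeasureTheory
open Real Set Filter

lemma half_exp_le_cosh (t : ℝ) : Real.exp t / 2 ≤ Real.cosh t := by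
  rw [Real.cosh_eq]
  have := (Real.exp_pos (-t)).le
  linarith

lemma cosh_le_exp_abs (t : ℝ) : Real.cosh t ≤ Real.exp |t| := by
  rw [Real.cosh_eq]
  have h1 : Real.exp t ≤ Real.exp |t| := Real.exp_le_exp.2 (le_abs_self t)
  have h2 : Real.exp (-t) ≤ Real.exp |t| := Real.exp_le_exp.2 (neg_le_abs t)
  linarith

lemma abs_sinh_le_exp_abs (t : ℝ) : |Real.sinh t| ≤ Real.exp |t| := by
  rw [Real.abs_sinh]
  calc Real.sinh |t| ≤ Real.cosh |t| := by
        have := Real.cosh_sub_sinh |t|; have := (Real.exp_pos (-|t|)).le; linarith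
    _ ≤ Real.exp |t| := by simpa using cosh_le_exp_abs |t|

/-- Core integrability: `exp (c*t) * exp (-x * cosh t)` is integrable on `(0,∞)` for `x > 0`. -/
lemma intAux (c : ℝ) {x : ℝ} (hx : 0 < x) :
    IntegrableOn (fun t => Real.exp (c * t) * Real.exp (-x * Real.cosh t)) (Set.Ioi 0) := by
  apply integrable_of_isBigO_exp_neg (b := 1) one_pos
  · exact ((Real.continuous_exp.comp (continuous_const.mul continuous_id)).mul
      (Real.continuous_exp.comp (continuous_const.mul Real.continuous_cosh))).continuousOn
  · rw [Asymptotics.isBigO_iff]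
    refine ⟨1, ?_⟩
    have h1 : Tendsto (fun t : ℝ => Real.exp t / t) atTop atTop := by
      simpa using Real.tendsto_exp_div_pow_atTop 1
    have h2 : ∀ᶠ t : ℝ in atTop, Real.exp t / t ≥ 2 * (c + 1) / x :=
      h1.eventually_ge_atTop _
    filter_upwards [h2, eventually_gt_atTop (0 : ℝ)] with t ht ht0
    have hc : (c + 1) * t ≤ x * Real.cosh t := by
      have h3 : 2 * (c + 1) / x * t ≤ Real.exp t := by
        rw [ge_iff_le, le_div_iff₀ ht0] at ht; linarith
      have h4 : Real.exp t / 2 ≤ Real.cosh t := half_exp_le_cosh t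
      have h5 : 2 * (c + 1) / x * t ≤ 2 * Real.cosh t := by linarith
      calc (c + 1) * t = x / 2 * (2 * (c + 1) / x * t) := by field_simp
        _ ≤ x / 2 * (2 * Real.cosh t) := by
            apply mul_le_mul_of_nonneg_left h5 (by linarith)
        _ = x * Real.cosh t := by ring
    rw [Real.norm_eq_abs, Real.norm_eq_abs, ← Real.exp_add, abs_of_pos (Real.exp_pos _),
      abs_of_pos (Real.exp_pos _), one_mul, Real.exp_le_exp]
    linarith

/-- Dominated integrability on `(0,∞)`. -/
lemma intDom {f : ℝ → ℝ} (c : ℝ) {x : ℝ} (hx : 0 < x)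
    (hf : AEStronglyMeasurable f (volume.restrict (Set.Ioi 0)))
    (hbd : ∀ t ∈ Set.Ioi (0:ℝ), |f t| ≤ Real.exp (c * t) * Real.exp (-x * Real.cosh t)) :
    IntegrableOn f (Set.Ioi 0) := by
  apply Integrable.mono' (intAux c hx) hf
  rw [ae_restrict_iff' measurableSet_Ioi]
  exact ae_of_all _ fun t ht => by simpa using hbd t ht



lemma besselK_integrand_meas (ν y : ℝ) :
    AEStronglyMeasurable (fun t => Real.exp (-y * Real.cosh t) * Real.cosh (ν * t))
      (volume.restrict (Set.Ioi 0)) :=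
  ((Real.continuous_exp.comp (continuous_const.mul Real.continuous_cosh)).mul
    (Real.continuous_cosh.comp (continuous_const.mul continuous_id))).aestronglyMeasurable

lemma besselK_integrand_bound (ν : ℝ) {y : ℝ} (t : ℝ) (ht : t ∈ Set.Ioi (0:ℝ)) :
    |Real.exp (-y * Real.cosh t) * Real.cosh (ν * t)| ≤
      Real.exp (|ν| * t) * Real.exp (-y * Real.cosh t) := by
  have ht0 : (0:ℝ) ≤ t := le_of_lt ht
  rw [abs_mul, abs_of_pos (Real.exp_pos _), abs_of_pos (Real.cosh_pos _), mul_comm]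
  apply mul_le_mul_of_nonneg_right _ (Real.exp_pos _).le
  calc Real.cosh (ν * t) ≤ Real.exp |ν * t| := cosh_le_exp_abs _
    _ = Real.exp (|ν| * t) := by rw [abs_mul, abs_of_nonneg ht0]

lemma besselK_integrable (ν : ℝ) {x : ℝ} (hx : 0 < x) :
    IntegrableOn (fun t => Real.exp (-x * Real.cosh t) * Real.cosh (ν * t)) (Set.Ioi 0) :=
  intDom |ν| hx (besselK_integrand_meas ν x) (besselK_integrand_bound ν)

lemma besselK_nonneg (ν x : ℝ) : 0 ≤ besselK ν x :=
  setIntegral_nonneg measurableSet_Ioi fun t _ =>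
    mul_nonneg (Real.exp_pos _).le (Real.cosh_pos _).le

/-- `K_ν'(x) = -(K_{ν-1}(x) + K_{ν+1}(x))/2` for `x > 0`. -/
lemma besselK_hasDerivAt (ν : ℝ) {x : ℝ} (hx : 0 < x) :
    HasDerivAt (besselK ν) (-(besselK (ν-1) x + besselK (ν+1) x)/2) x := by
  have key := hasDerivAt_integral_of_dominated_loc_of_deriv_le
    (μ := volume.restrict (Set.Ioi (0:ℝ))) (x₀ := x)
    (F := fun y t => Real.exp (-y * Real.cosh t) * Real.cosh (ν * t))
    (F' := fun y t => -(Real.cosh t * Real.exp (-y * Real.cosh t)) * Real.cosh (ν * t))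
    (bound := fun t => Real.exp ((|ν|+1) * t) * Real.exp (-(x/2) * Real.cosh t))
    (Metric.ball_mem_nhds x (half_pos hx))
    (Eventually.of_forall fun y => besselK_integrand_meas ν y)
    (besselK_integrable ν hx)
    ((Continuous.aestronglyMeasurable (by continuity :
        Continuous fun t => -(Real.cosh t * Real.exp (-x * Real.cosh t)) * Real.cosh (ν * t))))
    ?_ (intAux ((|ν|+1)) (half_pos hx)) ?_
  · obtain ⟨-, hd⟩ := key
    have heq : (∫ t in Set.Ioi (0:ℝ),
        -(Real.cosh t * Real.exp (-x * Real.cosh t)) * Real.cosh (ν * t)) =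
        -(besselK (ν-1) x + besselK (ν+1) x)/2 := by
      have hsplit : ∀ t : ℝ, -(Real.cosh t * Real.exp (-x * Real.cosh t)) * Real.cosh (ν * t)
          = (-(1/2:ℝ)) • (Real.exp (-x * Real.cosh t) * Real.cosh ((ν-1) * t)
              + Real.exp (-x * Real.cosh t) * Real.cosh ((ν+1) * t)) := by
        intro t
        have : Real.cosh ((ν-1)*t) + Real.cosh ((ν+1)*t)
            = 2 * (Real.cosh (ν*t) * Real.cosh t) := by
          have h1 : (ν-1)*t = ν*t - t := by ring
          have h2 : (ν+1)*t = ν*t + t := by ring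
          rw [h1, h2, Real.cosh_add, Real.cosh_sub]; ring
        simp only [smul_eq_mul]
        linear_combination ((1/2) * Real.exp (-x * Real.cosh t)) * this
      rw [show besselK (ν-1) x + besselK (ν+1) x = ∫ t in Set.Ioi (0:ℝ),
          (Real.exp (-x * Real.cosh t) * Real.cosh ((ν-1) * t)
            + Real.exp (-x * Real.cosh t) * Real.cosh ((ν+1) * t)) from
        (integral_add (besselK_integrable (ν-1) hx) (besselK_integrable (ν+1) hx)).symm]
      rw [show (fun t => -(Real.cosh t * Real.exp (-x * Real.cosh t)) * Real.cosh (ν * t))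
          = fun t => (-(1/2:ℝ)) • (Real.exp (-x * Real.cosh t) * Real.cosh ((ν-1) * t)
              + Real.exp (-x * Real.cosh t) * Real.cosh ((ν+1) * t)) from funext hsplit]
      rw [integral_smul]
      simp; ring
    rw [heq] at hd
    exact hd
  · -- bound
    rw [ae_restrict_iff' measurableSet_Ioi]
    apply ae_of_all
    intro t ht y hy
    have ht0 : (0:ℝ) < t := ht
    have hy2 : x/2 ≤ y := by
      have := abs_lt.1 (mem_ball_iff_norm.1 hy)
      linarith [this.1]
    have hb1 : |(-(Real.cosh t * Real.exp (-y * Real.cosh t)) * Real.cosh (ν * t))|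
        = Real.cosh t * Real.exp (-y * Real.cosh t) * Real.cosh (ν * t) := by
      rw [abs_mul, abs_neg, abs_mul, abs_of_pos (Real.cosh_pos _),
        abs_of_pos (Real.exp_pos _), abs_of_pos (Real.cosh_pos _)]
    rw [Real.norm_eq_abs, hb1]
    have h1 : Real.cosh t ≤ Real.exp t := by
      simpa [abs_of_nonneg ht0.le] using cosh_le_exp_abs t
    have h2 : Real.cosh (ν * t) ≤ Real.exp (|ν| * t) := by
      calc Real.cosh (ν * t) ≤ Real.exp |ν * t| := cosh_le_exp_abs _
        _ = Real.exp (|ν| * t) := by rw [abs_mul, abs_of_nonneg ht0.le]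
    have h3 : Real.exp (-y * Real.cosh t) ≤ Real.exp (-(x/2) * Real.cosh t) := by
      apply Real.exp_le_exp.2
      have := Real.cosh_pos t
      nlinarith
    calc Real.cosh t * Real.exp (-y * Real.cosh t) * Real.cosh (ν * t)
        ≤ Real.exp t * Real.exp (-(x/2) * Real.cosh t) * Real.exp (|ν| * t) := by
          apply mul_le_mul
          · exact mul_le_mul h1 h3 (Real.exp_pos _).le (Real.exp_pos _).le
          · exact h2
          · exact (Real.cosh_pos _).le
          · positivity
      _ = Real.exp ((|ν|+1) * t) * Real.exp (-(x/2) * Real.cosh t) := by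
          simp only [← Real.exp_add]; congr 1; ring
  · -- differentiability
    apply ae_of_all
    intro t y _
    have : HasDerivAt (fun y => Real.exp (-y * Real.cosh t))
        (-(Real.cosh t * Real.exp (-y * Real.cosh t))) y := by
      have h : HasDerivAt (fun y : ℝ => -y * Real.cosh t) (-Real.cosh t) y := by
        simpa using (hasDerivAt_id y).neg.mul_const (Real.cosh t)
      simpa [mul_comm] using h.exp
    simpa [mul_comm] using this.mul_const (Real.cosh (ν * t))



lemma intDomC {f : ℝ → ℝ} (C c : ℝ) {x : ℝ} (hx : 0 < x)
    (hf : AEStronglyMeasurable f (volume.restrict (Set.Ioi 0)))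
    (hbd : ∀ t ∈ Set.Ioi (0:ℝ), |f t| ≤ C * (Real.exp (c * t) * Real.exp (-x * Real.cosh t))) :
    IntegrableOn f (Set.Ioi 0) := by
  apply Integrable.mono' ((intAux c hx).const_mul C) hf
  rw [ae_restrict_iff' measurableSet_Ioi]
  exact ae_of_all _ fun t ht => by simpa using hbd t ht

/-- `x (K_{ν+1}(x) - K_{ν-1}(x)) = 2 ν K_ν(x)` for `x > 0`. -/
lemma besselK_recurrence (ν : ℝ) {x : ℝ} (hx : 0 < x) :
    x * (besselK (ν+1) x - besselK (ν-1) x) = 2 * ν * besselK ν x := by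
  set f : ℝ → ℝ := fun t => Real.exp (-x * Real.cosh t) * Real.sinh (ν * t) with hf
  set f' : ℝ → ℝ := fun t =>
    (-x * Real.sinh t) * (Real.exp (-x * Real.cosh t) * Real.sinh (ν * t))
      + ν * (Real.exp (-x * Real.cosh t) * Real.cosh (ν * t)) with hf'
  have hderiv : ∀ t : ℝ, HasDerivAt f (f' t) t := by
    intro t
    have h1 : HasDerivAt (fun t : ℝ => -x * Real.cosh t) (-x * Real.sinh t) t :=
      (Real.hasDerivAt_cosh t).const_mul (-x)
    have h2 : HasDerivAt (fun t : ℝ => Real.exp (-x * Real.cosh t))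
        (Real.exp (-x * Real.cosh t) * (-x * Real.sinh t)) t := h1.exp
    have h3 : HasDerivAt (fun t : ℝ => Real.sinh (ν * t)) (Real.cosh (ν * t) * ν) t := by
      have := (Real.hasDerivAt_sinh (ν * t)).comp t ((hasDerivAt_id t).const_mul ν)
      simpa [mul_comm, Function.comp_def] using this
    have := h2.mul h3
    refine this.congr_deriv ?_
    simp only [hf']
    ring
  have hpart1 : IntegrableOn (fun t =>
      (-x * Real.sinh t) * (Real.exp (-x * Real.cosh t) * Real.sinh (ν * t))) (Set.Ioi 0) := by
    apply intDomC x (|ν| + 1) hx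
    · apply Continuous.aestronglyMeasurable; continuity
    · intro t ht
      have ht0 : (0:ℝ) ≤ t := le_of_lt ht
      have h1 : |Real.sinh t| ≤ Real.exp t := by
        simpa [abs_of_nonneg ht0] using abs_sinh_le_exp_abs t
      have h2 : |Real.sinh (ν * t)| ≤ Real.exp (|ν| * t) := by
        calc |Real.sinh (ν * t)| ≤ Real.exp |ν * t| := abs_sinh_le_exp_abs _
          _ = Real.exp (|ν| * t) := by rw [abs_mul, abs_of_nonneg ht0]
      have e1 := Real.exp_pos (-x * Real.cosh t)
      have e2 := Real.exp_pos t
      have e3 := Real.exp_pos (|ν| * t)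
      calc |(-x * Real.sinh t) * (Real.exp (-x * Real.cosh t) * Real.sinh (ν * t))|
          = x * |Real.sinh t| * (Real.exp (-x * Real.cosh t) * |Real.sinh (ν * t)|) := by
            rw [abs_mul, abs_mul, abs_mul, abs_neg, abs_of_pos hx, abs_of_pos e1]
        _ ≤ x * Real.exp t * (Real.exp (-x * Real.cosh t) * Real.exp (|ν| * t)) := by
            apply mul_le_mul (mul_le_mul_of_nonneg_left h1 hx.le)
              (mul_le_mul_of_nonneg_left h2 e1.le)
              (by positivity) (by positivity)
        _ = x * (Real.exp ((|ν| + 1) * t) * Real.exp (-x * Real.cosh t)) := by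
            rw [show ((|ν| + 1) * t) = t + |ν| * t by ring, Real.exp_add]
            ring
  have hpart2 : IntegrableOn (fun t =>
      ν * (Real.exp (-x * Real.cosh t) * Real.cosh (ν * t))) (Set.Ioi 0) :=
    (besselK_integrable ν hx).const_mul ν
  have hf'int : IntegrableOn f' (Set.Ioi 0) := hpart1.add hpart2
  have htend : Tendsto f atTop (nhds 0) := by
    have hbd : ∀ᶠ t in atTop, |f t| ≤ Real.exp (|ν| * t - x / 2 * Real.exp t) := by
      filter_upwards [eventually_ge_atTop (0:ℝ)] with t ht0
      have h2 : |Real.sinh (ν * t)| ≤ Real.exp (|ν| * t) := by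
        calc |Real.sinh (ν * t)| ≤ Real.exp |ν * t| := abs_sinh_le_exp_abs _
          _ = Real.exp (|ν| * t) := by rw [abs_mul, abs_of_nonneg ht0]
      have h3 : Real.exp (-x * Real.cosh t) ≤ Real.exp (-(x / 2 * Real.exp t)) := by
        apply Real.exp_le_exp.2
        have := half_exp_le_cosh t
        nlinarith
      calc |f t| = Real.exp (-x * Real.cosh t) * |Real.sinh (ν * t)| := by
            rw [hf, abs_mul, abs_of_pos (Real.exp_pos _)]
        _ ≤ Real.exp (-(x / 2 * Real.exp t)) * Real.exp (|ν| * t) :=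
            mul_le_mul h3 h2 (abs_nonneg _) (Real.exp_pos _).le
        _ = Real.exp (|ν| * t - x / 2 * Real.exp t) := by
            rw [← Real.exp_add]; congr 1; ring
    have hlim : Tendsto (fun t => Real.exp (|ν| * t - x / 2 * Real.exp t)) atTop (nhds 0) := by
      apply Real.tendsto_exp_atBot.comp
      apply tendsto_atBot_mono' atTop ?_ (tendsto_neg_atBot_iff.2 tendsto_id)
      have h1 : Tendsto (fun t : ℝ => Real.exp t / t) atTop atTop := by
        simpa using Real.tendsto_exp_div_pow_atTop 1
      filter_upwards [h1.eventually_ge_atTop (2 * (|ν| + 1) / x), eventually_gt_atTop (0:ℝ)]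
        with t ht ht0
      have : 2 * (|ν| + 1) / x * t ≤ Real.exp t := (le_div_iff₀ ht0).1 ht
      have hxt : (|ν| + 1) * t ≤ x / 2 * Real.exp t := by
        have := mul_le_mul_of_nonneg_left this (by positivity : (0:ℝ) ≤ x / 2)
        calc (|ν| + 1) * t = x / 2 * (2 * (|ν| + 1) / x * t) := by field_simp
          _ ≤ x / 2 * Real.exp t := this
      simp only [id_eq]
      nlinarith
    exact squeeze_zero_norm' (by simpa using hbd) hlim
  have hint : ∫ t in Set.Ioi (0:ℝ), f' t = 0 - f 0 := by
    apply integral_Ioi_of_hasDerivAt_of_tendsto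
      (hderiv 0).continuousAt.continuousWithinAt
      (fun t _ => hderiv t) hf'int htend
  have hf0 : f 0 = 0 := by simp [hf]
  rw [hf0, sub_zero] at hint
  -- now compute the integral
  have hsum : ∫ t in Set.Ioi (0:ℝ), f' t
      = (∫ t in Set.Ioi (0:ℝ),
          (-x * Real.sinh t) * (Real.exp (-x * Real.cosh t) * Real.sinh (ν * t)))
        + ν * besselK ν x := by
    rw [hf']
    rw [integral_add hpart1 hpart2, integral_const_mul]
    rfl
  have hker : ∀ t : ℝ, (-x * Real.sinh t) * (Real.exp (-x * Real.cosh t) * Real.sinh (ν * t))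
      = (-(x/2)) • (Real.exp (-x * Real.cosh t) * Real.cosh ((ν+1) * t)
          - Real.exp (-x * Real.cosh t) * Real.cosh ((ν-1) * t)) := by
    intro t
    have h : Real.cosh ((ν+1)*t) - Real.cosh ((ν-1)*t)
        = 2 * (Real.sinh (ν*t) * Real.sinh t) := by
      have h1 : (ν+1)*t = ν*t + t := by ring
      have h2 : (ν-1)*t = ν*t - t := by ring
      rw [h1, h2, Real.cosh_add, Real.cosh_sub]; ring
    simp only [smul_eq_mul]
    linear_combination ((x/2) * Real.exp (-x * Real.cosh t)) * h
  have hint1 : (∫ t in Set.Ioi (0:ℝ),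
      (-x * Real.sinh t) * (Real.exp (-x * Real.cosh t) * Real.sinh (ν * t)))
      = -(x/2) * (besselK (ν+1) x - besselK (ν-1) x) := by
    rw [show (fun t => (-x * Real.sinh t) * (Real.exp (-x * Real.cosh t) * Real.sinh (ν * t)))
        = fun t => (-(x/2)) • (Real.exp (-x * Real.cosh t) * Real.cosh ((ν+1) * t)
          - Real.exp (-x * Real.cosh t) * Real.cosh ((ν-1) * t)) from funext hker]
    rw [integral_smul, integral_sub (besselK_integrable (ν+1) hx)
      (besselK_integrable (ν-1) hx)]
    simp [besselK]
  rw [hsum, hint1] at hint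
  linarith



lemma besselK_le_of_two_le (ν : ℝ) {x : ℝ} (hx : 2 ≤ x) :
    besselK ν x ≤ Real.exp (-x/2) * besselK ν 1 := by
  have hx0 : (0:ℝ) < x := by linarith
  have h : besselK ν x ≤ ∫ t in Set.Ioi (0:ℝ),
      Real.exp (-x/2) * (Real.exp (-(1:ℝ) * Real.cosh t) * Real.cosh (ν * t)) := by
    apply setIntegral_mono_on (besselK_integrable ν hx0)
      ((besselK_integrable ν one_pos).const_mul _) measurableSet_Ioi
    intro t _
    have hc := Real.one_le_cosh t
    have : -x * Real.cosh t ≤ -x/2 + (-(1:ℝ) * Real.cosh t) := by nlinarith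
    calc Real.exp (-x * Real.cosh t) * Real.cosh (ν * t)
        ≤ Real.exp (-x/2 + -(1:ℝ) * Real.cosh t) * Real.cosh (ν * t) :=
          mul_le_mul_of_nonneg_right (Real.exp_le_exp.2 this) (Real.cosh_pos _).le
      _ = Real.exp (-x/2) * (Real.exp (-(1:ℝ) * Real.cosh t) * Real.cosh (ν * t)) := by
          rw [Real.exp_add]; ring
  calc besselK ν x ≤ _ := h
    _ = Real.exp (-x/2) * besselK ν 1 := by
        rw [MeasureTheory.integral_const_mul]; rfl

lemma besselK_decay (N : ℕ) :
    Tendsto (fun ξ : ℝ => ξ ^ ((N:ℝ)/2) * besselK N (2 * Real.sqrt ξ)) atTop (nhds 0) := by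
  have hsqrt : Tendsto Real.sqrt atTop atTop := by
    have := tendsto_rpow_atTop (y := 1/2) (by norm_num)
    simpa only [← Real.sqrt_eq_rpow] using this
  have hlim : Tendsto (fun ξ : ℝ =>
      Real.sqrt ξ ^ N * Real.exp (-Real.sqrt ξ) * besselK N 1) atTop (nhds 0) := by
    have := ((tendsto_pow_mul_exp_neg_atTop_nhds_zero N).comp hsqrt).mul_const (besselK N 1)
    simpa using this
  apply squeeze_zero' ?_ ?_ hlim
  · filter_upwards [eventually_ge_atTop (0:ℝ)] with ξ hξ
    exact mul_nonneg (Real.rpow_nonneg hξ _) (besselK_nonneg _ _)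
  · filter_upwards [eventually_ge_atTop (1:ℝ)] with ξ hξ
    have hξ0 : (0:ℝ) ≤ ξ := by linarith
    have hs1 : 1 ≤ Real.sqrt ξ := by
      rw [show (1:ℝ) = Real.sqrt 1 from (Real.sqrt_one).symm]
      exact Real.sqrt_le_sqrt hξ
    have h2 : (2:ℝ) ≤ 2 * Real.sqrt ξ := by linarith
    have hb := besselK_le_of_two_le (N:ℝ) h2
    have hpow : ξ ^ ((N:ℝ)/2) = Real.sqrt ξ ^ N := by
      rw [Real.sqrt_eq_rpow, ← Real.rpow_natCast (ξ ^ (1/2 : ℝ)) N, ← Real.rpow_mul hξ0]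
      congr 1
      ring
    calc ξ ^ ((N:ℝ)/2) * besselK N (2 * Real.sqrt ξ)
        ≤ ξ ^ ((N:ℝ)/2) * (Real.exp (-(2 * Real.sqrt ξ)/2) * besselK N 1) :=
          mul_le_mul_of_nonneg_left hb (Real.rpow_nonneg hξ0 _)
      _ = Real.sqrt ξ ^ N * Real.exp (-Real.sqrt ξ) * besselK N 1 := by
          rw [hpow, show (-(2 * Real.sqrt ξ)/2) = -Real.sqrt ξ by ring]; ring



lemma H_hasDerivAt (N : ℕ) (hN : 1 ≤ N) {γ : ℝ} (hγ : 0 < γ) :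
    HasDerivAt (fun γ : ℝ => 1 - 2 * γ ^ ((N : ℝ) / 2) / Real.Gamma N * besselK N (2 * Real.sqrt γ))
      (γ ^ (((N : ℝ) - 1) / 2) / Real.Gamma N * 2 * besselK ((N : ℝ) - 1) (2 * Real.sqrt γ)) γ := by
  have hΓ : (0:ℝ) < Real.Gamma N := Real.Gamma_pos_of_pos (by exact_mod_cast hN.trans_lt' zero_lt_one)
  set s := Real.sqrt γ with hs
  have hs0 : 0 < s := Real.sqrt_pos.2 hγ
  have hss : s * s = γ := Real.mul_self_sqrt hγ.le
  have hKd := besselK_hasDerivAt (N:ℝ) (x := 2*s) (by positivity)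
  have hsd : HasDerivAt (fun γ : ℝ => 2 * Real.sqrt γ) (2 * (1/(2*s))) γ :=
    (Real.hasDerivAt_sqrt hγ.ne').const_mul 2
  have hcomp : HasDerivAt (fun γ : ℝ => besselK N (2 * Real.sqrt γ))
      ((-(besselK ((N:ℝ)-1) (2*s) + besselK ((N:ℝ)+1) (2*s))/2) * (2 * (1/(2*s)))) γ :=
    by have := hKd.comp γ hsd; exact this
  have hpow : HasDerivAt (fun γ : ℝ => γ ^ ((N:ℝ)/2)) (((N:ℝ)/2) * γ ^ ((N:ℝ)/2 - 1)) γ :=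
    Real.hasDerivAt_rpow_const (Or.inl hγ.ne')
  have hmul := (hpow.mul hcomp).const_mul (2 / Real.Gamma N)
  have hfin := hmul.const_sub 1
  have hfun : (fun γ : ℝ => 1 - 2 * γ ^ ((N : ℝ) / 2) / Real.Gamma N * besselK N (2 * Real.sqrt γ))
      = fun γ : ℝ => 1 - 2 / Real.Gamma N * (γ ^ ((N:ℝ)/2) * besselK N (2 * Real.sqrt γ)) := by
    funext γ; ring
  rw [hfun]
  refine hfin.congr_deriv ?_
  -- algebra
  have hrec := besselK_recurrence (N:ℝ) (x := 2*s) (by positivity)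
  have hA1 : γ ^ ((N:ℝ)/2) = γ ^ (((N:ℝ)-1)/2) * s := by
    rw [hs, Real.sqrt_eq_rpow, ← Real.rpow_add hγ]
    congr 1; ring
  have hA2 : γ ^ ((N:ℝ)/2 - 1) = γ ^ (((N:ℝ)-1)/2) / s := by
    rw [hs, Real.sqrt_eq_rpow, ← Real.rpow_sub hγ]
    congr 1; ring
  set A := γ ^ (((N:ℝ)-1)/2) with hA
  set K := besselK (N:ℝ) (2*s)
  set Km := besselK ((N:ℝ)-1) (2*s)
  set Kp := besselK ((N:ℝ)+1) (2*s)
  rw [hA1, hA2]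
  field_simp
  linear_combination (A / 2) * hrec



lemma dens_continuousOn (N : ℕ) :
    ContinuousOn (fun R : ℝ =>
      R ^ (((N : ℝ) - 1) / 2) / Real.Gamma N * 2 * besselK ((N : ℝ) - 1) (2 * Real.sqrt R))
      (Set.Ioi 0) := by
  intro R hR
  have hR0 : (0:ℝ) < R := hR
  apply ContinuousAt.continuousWithinAt
  have c1 : ContinuousAt (fun R : ℝ => R ^ (((N : ℝ) - 1) / 2)) R :=
    Real.continuousAt_rpow_const R _ (Or.inl hR0.ne')
  have c2 : ContinuousAt (fun R : ℝ => besselK ((N : ℝ) - 1) (2 * Real.sqrt R)) R := by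
    have hb : ContinuousAt (besselK ((N : ℝ) - 1)) (2 * Real.sqrt R) :=
      (besselK_hasDerivAt _ (by positivity : (0:ℝ) < 2 * Real.sqrt R)).continuousAt
    exact ContinuousAt.comp (g := besselK ((N:ℝ)-1)) hb
      ((continuous_const.mul Real.continuous_sqrt).continuousAt)
  exact ((c1.div_const _).mul continuousAt_const).mul c2



theorem cdf_of_squared_modulus {Ω : Type*} [MeasurableSpace Ω]
    (μ : Measure Ω) [IsProbabilityMeasure μ] (N : ℕ) (hN : 1 ≤ N)
    (X : Ω → ℝ) (hXm : Measurable X)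
    (hX : ∀ ξ : ℝ, μ {ω | X ω ≤ ξ} =
      ENNReal.ofReal (∫ R in Set.Ioc (0 : ℝ) ξ,
        R ^ (((N : ℝ) - 1) / 2) / Real.Gamma N * 2 * besselK ((N : ℝ) - 1) (2 * Real.sqrt R))) :
    ∀ γ : ℝ, 0 < γ →
      μ {ω | X ω < γ} =
        ENNReal.ofReal (1 - 2 * γ ^ ((N : ℝ) / 2) / Real.Gamma N * besselK N (2 * Real.sqrt γ)) := by
  intro γ hγ
  set dens : ℝ → ℝ := fun R =>
    R ^ (((N : ℝ) - 1) / 2) / Real.Gamma N * 2 * besselK ((N : ℝ) - 1) (2 * Real.sqrt R)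
    with hdens
  set H : ℝ → ℝ := fun γ =>
    1 - 2 * γ ^ ((N : ℝ) / 2) / Real.Gamma N * besselK N (2 * Real.sqrt γ) with hH
  -- FTC on compact subintervals of (0, ∞)
  have hFTC : ∀ {a b : ℝ}, 0 < a → a ≤ b →
      ∫ R in Set.Ioc a b, dens R = H b - H a := by
    intro a b ha hab
    have huIcc : Set.uIcc a b = Set.Icc a b := Set.uIcc_of_le hab
    have hsub : Set.uIcc a b ⊆ Set.Ioi (0:ℝ) := by
      rw [huIcc]; intro t ht; exact lt_of_lt_of_le ha ht.1
    have hII : IntervalIntegrable dens volume a b :=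
      ((dens_continuousOn N).mono hsub).intervalIntegrable
    have := intervalIntegral.integral_eq_sub_of_hasDerivAt
      (f := H) (f' := dens)
      (fun t ht => H_hasDerivAt N hN (hsub ht)) hII
    rw [← intervalIntegral.integral_of_le hab, this]
  -- Case: density not integrable near 0 leads to contradiction
  by_cases hI : IntegrableOn dens (Set.Ioc (0:ℝ) 1)
  swap
  · exfalso
    have hzero : ∀ ξ : ℝ, μ {ω | X ω ≤ ξ} = 0 := by
      intro ξ
      rcases le_or_gt ξ 0 with hξ | hξ
      · rw [hX ξ, Set.Ioc_eq_empty (by exact fun h => absurd (h.trans_le hξ) (lt_irrefl 0))]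
        simp
      · have hni : ¬ IntegrableOn dens (Set.Ioc (0:ℝ) ξ) := by
          rcases le_or_gt 1 ξ with h1 | h1
          · exact fun h => hI (h.mono_set (Set.Ioc_subset_Ioc le_rfl h1))
          · intro h
            apply hI
            have hcont : IntegrableOn dens (Set.Ioc ξ 1) := by
              apply ContinuousOn.integrableOn_Icc ((dens_continuousOn N).mono ?_) |>.mono_set
                Set.Ioc_subset_Icc_self
              intro t ht; exact lt_of_lt_of_le hξ ht.1
            rw [← Set.Ioc_union_Ioc_eq_Ioc hξ.le h1.le]
            exact h.union hcont
        rw [hX ξ, integral_undef hni]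
        simp
    have huniv : (⋃ n : ℕ, {ω | X ω ≤ (n:ℝ)}) = Set.univ := by
      ext ω; simp only [Set.mem_iUnion, Set.mem_univ, iff_true, Set.mem_setOf_eq]
      exact exists_nat_ge (X ω)
    have h1 : μ Set.univ = 0 := by
      rw [← huniv]
      refine le_antisymm ((measure_iUnion_le _).trans ?_) (zero_le)
      simp [hzero]
    simp [measure_univ] at h1
  -- Main case: density integrable near 0
  · have hIξ : ∀ ξ : ℝ, 0 < ξ → IntegrableOn dens (Set.Ioc (0:ℝ) ξ) := by
      intro ξ hξ
      rcases le_or_gt ξ 1 with h1 | h1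
      · exact hI.mono_set (Set.Ioc_subset_Ioc le_rfl h1)
      · have hcont : IntegrableOn dens (Set.Ioc 1 ξ) := by
          apply ContinuousOn.integrableOn_Icc ((dens_continuousOn N).mono ?_) |>.mono_set
            Set.Ioc_subset_Icc_self
          intro t ht; exact lt_of_lt_of_le one_pos ht.1
        rw [← Set.Ioc_union_Ioc_eq_Ioc one_pos.le h1.le]
        exact hI.union hcont
    set G : ℝ → ℝ := fun ξ => ∫ R in Set.Ioc (0:ℝ) ξ, dens R with hG
    have hGsplit : ∀ {a b : ℝ}, 0 < a → a ≤ b → G b = G a + (H b - H a) := by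
      intro a b ha hab
      rw [← hFTC ha hab, hG]
      simp only
      rw [← setIntegral_union (Set.Ioc_disjoint_Ioc_of_le le_rfl) measurableSet_Ioc
        (hIξ a ha) (((dens_continuousOn N).mono ?_).integrableOn_Icc.mono_set
          Set.Ioc_subset_Icc_self)]
      · rw [Set.Ioc_union_Ioc_eq_Ioc ha.le hab]
      · intro t ht; exact lt_of_lt_of_le ha ht.1
    set c : ℝ := G 1 - H 1 with hc
    have hGc : ∀ {ξ : ℝ}, 0 < ξ → G ξ = H ξ + c := by
      intro ξ hξ
      rcases le_or_gt 1 ξ with h1 | h1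
      · have := hGsplit one_pos h1; rw [this, hc]; ring
      · have := hGsplit hξ h1.le; rw [hc, this]; ring
    -- identify c = 0 via the limit at infinity
    have hHlim : Tendsto (fun n : ℕ => H ((n:ℝ) + 1)) atTop (nhds 1) := by
      have hcomp : Tendsto (fun n : ℕ => ((n:ℝ) + 1)) atTop atTop :=
        tendsto_atTop_add_const_right _ 1 tendsto_natCast_atTop_atTop
      have := (besselK_decay N).comp hcomp
      have h2 : Tendsto (fun n : ℕ =>
          2 * (((n:ℝ)+1) ^ ((N:ℝ)/2) * besselK N (2 * Real.sqrt ((n:ℝ)+1))) / Real.Gamma N)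
          atTop (nhds 0) := by
        simpa using (this.const_mul 2).div_const (Real.Gamma N)
      have : Tendsto (fun n : ℕ =>
          1 - 2 * (((n:ℝ)+1) ^ ((N:ℝ)/2) * besselK N (2 * Real.sqrt ((n:ℝ)+1))) / Real.Gamma N)
          atTop (nhds (1 - 0)) := tendsto_const_nhds.sub h2
      rw [sub_zero] at this
      apply this.congr
      intro n
      rw [hH]
      ring
    have hμlim : Tendsto (fun n : ℕ => μ {ω | X ω ≤ (n:ℝ) + 1}) atTop (nhds (μ Set.univ)) := by
      have hmono : Monotone (fun n : ℕ => {ω | X ω ≤ (n:ℝ) + 1}) := by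
        intro m n hmn ω hω
        simp only [Set.mem_setOf_eq] at hω ⊢
        have : (m:ℝ) ≤ (n:ℝ) := Nat.cast_le.2 hmn
        linarith
      have huniv : (⋃ n : ℕ, {ω | X ω ≤ (n:ℝ) + 1}) = Set.univ := by
        ext ω; simp only [Set.mem_iUnion, Set.mem_univ, iff_true, Set.mem_setOf_eq]
        obtain ⟨n, hn⟩ := exists_nat_ge (X ω)
        exact ⟨n, by linarith⟩
      rw [← huniv]
      exact tendsto_measure_iUnion_atTop hmono
    have hofR : Tendsto (fun n : ℕ => μ {ω | X ω ≤ (n:ℝ) + 1}) atTop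
        (nhds (ENNReal.ofReal (1 + c))) := by
      have heq : ∀ n : ℕ, μ {ω | X ω ≤ (n:ℝ) + 1} = ENNReal.ofReal (H ((n:ℝ)+1) + c) := by
        intro n
        have h2 : G ((n:ℝ)+1) = H ((n:ℝ)+1) + c := hGc (by positivity)
        rw [hX]
        exact congrArg ENNReal.ofReal h2
      rw [show (fun n : ℕ => μ {ω | X ω ≤ (n:ℝ) + 1})
          = fun n : ℕ => ENNReal.ofReal (H ((n:ℝ)+1) + c) from funext heq]
      exact (ENNReal.continuous_ofReal.tendsto _).comp (hHlim.add_const c)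
    have hceq : ENNReal.ofReal (1 + c) = 1 := by
      rw [← measure_univ (μ := μ)]
      exact tendsto_nhds_unique hofR hμlim
    have hc0 : c = 0 := by
      rw [ENNReal.ofReal_eq_one] at hceq
      linarith
    -- conclude: μ {X < γ} via increasing approximation
    set a : ℕ → ℝ := fun n => γ - γ / (n + 2) with ha
    have hapos : ∀ n, 0 < a n := by
      intro n
      have h2 : (0:ℝ) < (n:ℝ) + 2 := by positivity
      have : γ / ((n:ℝ) + 2) < γ := by
        rw [div_lt_iff₀ h2]
        nlinarith
      simpa [ha] using sub_pos.2 this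
    have hamono : Monotone a := by
      intro m n hmn
      have : γ / ((n:ℝ) + 2) ≤ γ / ((m:ℝ) + 2) := by
        apply div_le_div_of_nonneg_left hγ.le (by positivity)
        exact_mod_cast add_le_add_left (Nat.cast_le.2 hmn) 2
      simp only [ha]
      linarith
    have haset : {ω | X ω < γ} = ⋃ n : ℕ, {ω | X ω ≤ a n} := by
      ext ω
      simp only [Set.mem_setOf_eq, Set.mem_iUnion]
      constructor
      · intro hω
        obtain ⟨n, hn⟩ := exists_nat_one_div_lt
          (show (0:ℝ) < (γ - X ω) / γ from div_pos (by linarith) hγ)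
        refine ⟨n, ?_⟩
        have h1 : γ / ((n:ℝ) + 2) ≤ γ * (1 / ((n:ℝ) + 1)) := by
          rw [div_eq_mul_one_div]
          apply mul_le_mul_of_nonneg_left _ hγ.le
          apply div_le_div_of_nonneg_left one_pos.le (by positivity)
          linarith
        have h2 : γ * (1 / ((n:ℝ) + 1)) < γ * ((γ - X ω) / γ) :=
          mul_lt_mul_of_pos_left hn hγ
        have h3 : γ * ((γ - X ω) / γ) = γ - X ω := by field_simp
        simp only [ha]
        linarith
      · rintro ⟨n, hn⟩
        have : a n < γ := by
          have h2 : (0:ℝ) < γ / ((n:ℝ) + 2) := by positivity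
          simp only [ha]; linarith
        linarith
    have hμγ : Tendsto (fun n : ℕ => μ {ω | X ω ≤ a n}) atTop (nhds (μ {ω | X ω < γ})) := by
      rw [haset]
      exact tendsto_measure_iUnion_atTop (fun m n hmn ω hω => le_trans hω (hamono hmn))
    have haten : Tendsto a atTop (nhds γ) := by
      have h2 : Tendsto (fun n : ℕ => ((n:ℝ) + 2)) atTop atTop :=
        tendsto_atTop_add_const_right _ 2 tendsto_natCast_atTop_atTop
      have := (tendsto_const_nhds (x := γ) (f := atTop (α := ℕ))).div_atTop h2
      have h3 := tendsto_const_nhds (x := γ) (f := atTop (α := ℕ)) |>.sub this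
      simpa [ha] using h3
    have hHcont : ContinuousAt H γ := (H_hasDerivAt N hN hγ).continuousAt
    have hofR2 : Tendsto (fun n : ℕ => μ {ω | X ω ≤ a n}) atTop
        (nhds (ENNReal.ofReal (H γ))) := by
      have heq : ∀ n : ℕ, μ {ω | X ω ≤ a n} = ENNReal.ofReal (H (a n)) := by
        intro n
        have h2 : G (a n) = H (a n) := by rw [hGc (hapos n), hc0, add_zero]
        rw [hX]
        exact congrArg ENNReal.ofReal h2
      rw [show (fun n : ℕ => μ {ω | X ω ≤ a n})
          = fun n : ℕ => ENNReal.ofReal (H (a n)) from funext heq]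
      exact (ENNReal.continuous_ofReal.tendsto _).comp (hHcont.tendsto.comp haten)
    exact tendsto_nhds_unique hμγ hofR2
end

section
/- For integer N ≥ 2, the function F(γ) = 1 − (2 γ^{N/2}/Γ(N)) K_N(2√γ) satisfies lim_{γ→0⁺} F(γ)/γ = 1/(N−1). -/
open Filter

open MeasureTheory Set Real in

lemma int_aux (c γ : ℝ) (hc0 : 0 ≤ c) (hγ : 0 ≤ γ) :
    IntegrableOn (fun u : ℝ => Real.exp (-u - γ/u) * u ^ c) (Set.Ioi 0) := by
  have h0 := Real.GammaIntegral_convergent (by linarith : (0:ℝ) < c + 1)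
  simp only [add_sub_cancel_right] at h0
  refine h0.mono' ?_ ?_
  · have : Measurable fun u : ℝ => Real.exp (-u - γ/u) * u ^ c := by
      apply Measurable.mul
      · exact Real.measurable_exp.comp ((measurable_neg).sub (measurable_const.div measurable_id))
      · exact (Real.continuous_rpow_const hc0).measurable
    exact this.aestronglyMeasurable
  · rw [ae_restrict_iff' measurableSet_Ioi]
    filter_upwards with u hu
    have hu0 : (0:ℝ) < u := hu
    rw [Real.norm_eq_abs, abs_of_nonneg (mul_nonneg (Real.exp_pos _).le (Real.rpow_nonneg hu0.le _))]
    have : -u - γ/u ≤ -u := by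
      have : 0 ≤ γ/u := div_nonneg hγ hu0.le
      linarith
    exact mul_le_mul_of_nonneg_right (Real.exp_le_exp.2 this) (Real.rpow_nonneg hu0.le _)


open MeasureTheory Set Real

lemma image_pos (s : ℝ) (hs : 0 < s) :
    (fun t : ℝ => s * Real.exp t) '' Set.Ioi 0 = Set.Ioi s := by
  ext u
  simp only [Set.mem_image, Set.mem_Ioi]
  constructor
  · rintro ⟨t, ht, rfl⟩
    calc s = s * 1 := by ring
    _ < s * Real.exp t := by
      exact mul_lt_mul_of_pos_left (by simpa using Real.one_lt_exp_iff.2 ht) hs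
  · intro hu
    refine ⟨Real.log (u / s), ?_, ?_⟩
    · exact Real.log_pos ((one_lt_div hs).2 hu)
    · rw [Real.exp_log (div_pos (hs.trans hu) hs)]
      field_simp
lemma image_neg (s : ℝ) (hs : 0 < s) :
    (fun t : ℝ => s * Real.exp (-t)) '' Set.Ioi 0 = Set.Ioo 0 s := by
  ext u
  simp only [Set.mem_image, Set.mem_Ioi, Set.mem_Ioo]
  constructor
  · rintro ⟨t, ht, rfl⟩
    constructor
    · positivity
    · have h1 : Real.exp (-t) < 1 := Real.exp_lt_one_iff.2 (by linarith)
      calc s * Real.exp (-t) < s * 1 := mul_lt_mul_of_pos_left h1 hs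
        _ = s := by ring
  · rintro ⟨hu0, hus⟩
    refine ⟨-Real.log (u / s), ?_, ?_⟩
    · have := Real.log_neg (div_pos hu0 hs) ((div_lt_one hs).2 hus)
      linarith
    · rw [neg_neg, Real.exp_log (by positivity : (0:ℝ) < u / s)]
      field_simp

lemma besselK_key (N : ℕ) (hN : 2 ≤ N) (γ : ℝ) (hγ : 0 < γ) :
    2 * γ ^ ((N : ℝ) / 2) * besselK N (2 * Real.sqrt γ) =
      ∫ u in Set.Ioi (0:ℝ), Real.exp (-u - γ/u) * u ^ ((N:ℝ) - 1) := by
  have hs : 0 < Real.sqrt γ := Real.sqrt_pos.2 hγ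
  set s : ℝ := Real.sqrt γ with hsdef
  have hγs : γ = s ^ 2 := (Real.sq_sqrt hγ.le).symm
  have hc0 : (0:ℝ) ≤ (N:ℝ) - 1 := by
    have : (2:ℝ) ≤ (N:ℝ) := by exact_mod_cast hN
    linarith
  set g : ℝ → ℝ := fun u => Real.exp (-u - γ/u) * u ^ ((N:ℝ) - 1) with hgdef
  have hgint : IntegrableOn g (Set.Ioi 0) := int_aux _ γ hc0 hγ.le
  set A : ℝ → ℝ := fun t =>
    s ^ (N:ℝ) * (Real.exp (-(2*s) * Real.cosh t) * Real.exp ((N:ℝ) * t)) with hAdef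
  set B : ℝ → ℝ := fun t =>
    s ^ (N:ℝ) * (Real.exp (-(2*s) * Real.cosh t) * Real.exp (-((N:ℝ) * t))) with hBdef
  -- pointwise identities
  have hsN : s ^ ((N:ℝ)) = s * s ^ ((N:ℝ) - 1) := by
    have h1 : (N:ℝ) = 1 + ((N:ℝ) - 1) := by ring
    rw [h1, Real.rpow_add hs, Real.rpow_one]
    ring_nf
  have hptA : ∀ t : ℝ, |s * Real.exp t| • g (s * Real.exp t) = A t := by
    intro t
    have hE : (0:ℝ) < Real.exp t := Real.exp_pos t
    have h1 : γ / (s * Real.exp t) = s * Real.exp (-t) := by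
      rw [hγs, Real.exp_neg]
      field_simp
    have hXY : -(2*s) * Real.cosh t = -(s * Real.exp t) - s * Real.exp (-t) := by
      rw [Real.cosh_eq]; ring
    have hE2 : Real.exp t * Real.exp (t * ((N:ℝ)-1)) = Real.exp ((N:ℝ)*t) := by
      rw [← Real.exp_add]; congr 1; ring
    simp only [hAdef, hgdef, smul_eq_mul]
    rw [abs_of_pos (mul_pos hs hE), h1, hXY, Real.mul_rpow hs.le hE.le, ← Real.exp_mul,
      hsN, ← hE2]
    ring
  have hptB : ∀ t : ℝ, |s * (Real.exp (-t) * -1)| • g (s * Real.exp (-t)) = B t := by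
    intro t
    have hE : (0:ℝ) < Real.exp (-t) := Real.exp_pos _
    have h1 : γ / (s * Real.exp (-t)) = s * Real.exp t := by
      rw [hγs, Real.exp_neg]
      field_simp
    have habs : |s * (Real.exp (-t) * -1)| = s * Real.exp (-t) := by
      rw [abs_of_neg (by nlinarith : s * (Real.exp (-t) * -1) < 0)]
      ring
    have hXY : -(2*s) * Real.cosh t = -(s * Real.exp (-t)) - s * Real.exp t := by
      rw [Real.cosh_eq]; ring
    have hE2 : Real.exp (-t) * Real.exp (-t * ((N:ℝ)-1)) = Real.exp (-((N:ℝ)*t)) := by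
      rw [← Real.exp_add]; congr 1; ring
    simp only [hBdef, hgdef, smul_eq_mul]
    rw [habs, h1, hXY, Real.mul_rpow hs.le hE.le, ← Real.exp_mul, hsN, ← hE2]
    ring
  -- change of variables, plus branch
  have hinjp : Set.InjOn (fun t : ℝ => s * Real.exp t) (Set.Ioi 0) := by
    intro a _ b _ h
    exact Real.exp_injective (mul_left_cancel₀ hs.ne' h)
  have hinjm : Set.InjOn (fun t : ℝ => s * Real.exp (-t)) (Set.Ioi 0) := by
    intro a _ b _ h
    have := Real.exp_injective (mul_left_cancel₀ hs.ne' h)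
    linarith [neg_injective this]
  have hcovp : ∫ u in Set.Ioi s, g u = ∫ t in Set.Ioi (0:ℝ), A t := by
    rw [← image_pos s hs,
      integral_image_eq_integral_abs_deriv_smul measurableSet_Ioi
        (fun t _ => ((Real.hasDerivAt_exp t).const_mul s).hasDerivWithinAt) hinjp g]
    exact setIntegral_congr_fun measurableSet_Ioi fun t _ => hptA t
  have hderivm : ∀ t : ℝ, HasDerivAt (fun t : ℝ => s * Real.exp (-t))
      (s * (Real.exp (-t) * -1)) t := by
    intro t
    exact (((Real.hasDerivAt_exp (-t)).comp t (hasDerivAt_neg t))).const_mul s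
  have hcovm : ∫ u in Set.Ioo 0 s, g u = ∫ t in Set.Ioi (0:ℝ), B t := by
    rw [← image_neg s hs,
      integral_image_eq_integral_abs_deriv_smul measurableSet_Ioi
        (fun t _ => (hderivm t).hasDerivWithinAt) hinjm g]
    exact setIntegral_congr_fun measurableSet_Ioi fun t _ => hptB t
  -- integrability of A and B
  have hintA : IntegrableOn A (Set.Ioi 0) := by
    have h := (integrableOn_image_iff_integrableOn_abs_deriv_smul measurableSet_Ioi
      (fun t (_ : t ∈ Set.Ioi (0:ℝ)) =>
        ((Real.hasDerivAt_exp t).const_mul s).hasDerivWithinAt) hinjp g).1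
    rw [image_pos s hs] at h
    have h2 := h (hgint.mono_set (Set.Ioi_subset_Ioi hs.le))
    exact h2.congr_fun (fun t _ => hptA t) measurableSet_Ioi
  have hintB : IntegrableOn B (Set.Ioi 0) := by
    have h := (integrableOn_image_iff_integrableOn_abs_deriv_smul measurableSet_Ioi
      (fun t (_ : t ∈ Set.Ioi (0:ℝ)) => (hderivm t).hasDerivWithinAt) hinjm g).1
    rw [image_neg s hs] at h
    have h2 := h (hgint.mono_set Set.Ioo_subset_Ioi_self)
    exact h2.congr_fun (fun t _ => hptB t) measurableSet_Ioi
  -- split the u-integral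
  have hsplit : ∫ u in Set.Ioi (0:ℝ), g u
      = (∫ u in Set.Ioo 0 s, g u) + ∫ u in Set.Ioi s, g u := by
    rw [← Set.Ioc_union_Ioi_eq_Ioi hs.le,
      setIntegral_union (Set.Ioc_disjoint_Ioi le_rfl) measurableSet_Ioi
        (hgint.mono_set (by rw [← Set.Ioc_union_Ioi_eq_Ioi hs.le]; exact Set.subset_union_left))
        (hgint.mono_set (by rw [← Set.Ioc_union_Ioi_eq_Ioi hs.le]; exact Set.subset_union_right)),
      integral_Ioc_eq_integral_Ioo]
  -- besselK side
  have hγpow : γ ^ ((N:ℝ)/2) = s ^ (N:ℝ) := by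
    rw [hγs, ← Real.rpow_natCast s 2, ← Real.rpow_mul hs.le,
      show ((2:ℕ):ℝ) * ((N:ℝ)/2) = (N:ℝ) by push_cast; ring]
  have h2s : 2 * Real.sqrt γ = 2 * s := rfl
  calc 2 * γ ^ ((N : ℝ) / 2) * besselK N (2 * Real.sqrt γ)
      = ∫ t in Set.Ioi (0:ℝ), (A t + B t) := by
        rw [h2s, hγpow, besselK]
        rw [← MeasureTheory.integral_const_mul]
        refine setIntegral_congr_fun measurableSet_Ioi fun t _ => ?_
        rw [Real.cosh_eq ((N:ℝ) * t), hAdef, hBdef]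
        simp only []
        ring
    _ = (∫ t in Set.Ioi (0:ℝ), A t) + ∫ t in Set.Ioi (0:ℝ), B t :=
        integral_add hintA hintB
    _ = ∫ u in Set.Ioi (0:ℝ), g u := by rw [← hcovp, ← hcovm, hsplit]; ring

lemma tendsto_one_sub_exp_div (u : ℝ) (hu : 0 < u) :
    Tendsto (fun γ : ℝ => (1 - Real.exp (-γ/u))/γ) (nhdsWithin 0 (Set.Ioi 0))
      (nhds (1/u)) := by
  have hexp : Tendsto (slope Real.exp 0) (nhdsWithin 0 {(0:ℝ)}ᶜ) (nhds 1) := by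
    simpa using hasDerivAt_iff_tendsto_slope.1 (Real.hasDerivAt_exp 0)
  have hmap : Tendsto (fun γ : ℝ => -γ/u) (nhdsWithin 0 (Set.Ioi 0))
      (nhdsWithin 0 {(0:ℝ)}ᶜ) := by
    rw [tendsto_nhdsWithin_iff]
    constructor
    · have h := ((continuous_id.neg.div_const u).tendsto (0:ℝ)).mono_left
        (nhdsWithin_le_nhds (s := Set.Ioi 0))
      simpa using h
    · filter_upwards [self_mem_nhdsWithin] with γ (hγ : γ ∈ Set.Ioi 0)
      have : -γ/u < 0 := div_neg_of_neg_of_pos (by linarith [Set.mem_Ioi.1 hγ]) hu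
      exact this.ne
  have h2 : Tendsto (fun γ : ℝ => (1/u) * slope Real.exp 0 (-γ/u))
      (nhdsWithin 0 (Set.Ioi 0)) (nhds ((1/u) * 1)) :=
    (hexp.comp hmap).const_mul _
  rw [mul_one] at h2
  refine h2.congr' ?_
  filter_upwards [self_mem_nhdsWithin] with γ (hγ : γ ∈ Set.Ioi 0)
  have hγ0 : (0:ℝ) < γ := hγ
  rw [slope_def_field, Real.exp_zero]
  generalize Real.exp (-γ/u) = e
  field_simp [hγ0.ne', hu.ne']
  ring

theorem outage_probability_small_threshold (N : ℕ) (hN : 2 ≤ N) :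
    Tendsto
      (fun γ : ℝ =>
        (1 - 2 * γ ^ ((N : ℝ) / 2) / Real.Gamma N * besselK N (2 * Real.sqrt γ)) / γ)
      (nhdsWithin 0 (Set.Ioi 0)) (nhds (1 / ((N : ℝ) - 1))) := by
  have hN2 : (2:ℝ) ≤ (N:ℝ) := by exact_mod_cast hN
  have hc0 : (0:ℝ) ≤ (N:ℝ) - 1 := by linarith
  have hc1 : (0:ℝ) < (N:ℝ) - 1 := by linarith
  have hΓpos : 0 < Real.Gamma (N:ℝ) := Real.Gamma_pos_of_pos (by linarith)
  have hΓint : Real.Gamma (N:ℝ) = ∫ u in Set.Ioi (0:ℝ), Real.exp (-u) * u ^ ((N:ℝ)-1) :=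
    Real.Gamma_eq_integral (by linarith : (0:ℝ) < (N:ℝ))
  have int0 : IntegrableOn (fun u : ℝ => Real.exp (-u) * u ^ ((N:ℝ)-1)) (Set.Ioi 0) :=
    Real.GammaIntegral_convergent (show (0:ℝ) < (N:ℝ) by linarith)
  have bound_int : IntegrableOn (fun u : ℝ => Real.exp (-u) * u ^ ((N:ℝ)-1-1)) (Set.Ioi 0) :=
    Real.GammaIntegral_convergent hc1
  have hDCT : Tendsto (fun γ : ℝ => ∫ u in Set.Ioi (0:ℝ),
      (Real.exp (-u) * u ^ ((N:ℝ)-1) - Real.exp (-u - γ/u) * u ^ ((N:ℝ)-1))/γ)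
      (nhdsWithin 0 (Set.Ioi 0))
      (nhds (∫ u in Set.Ioi (0:ℝ), Real.exp (-u) * u ^ ((N:ℝ)-1-1))) := by
    apply MeasureTheory.tendsto_integral_filter_of_dominated_convergence
      (fun u => Real.exp (-u) * u ^ ((N:ℝ)-1-1))
    · filter_upwards with γ
      apply Measurable.aestronglyMeasurable
      apply Measurable.div_const
      apply Measurable.sub
      · exact (Real.measurable_exp.comp measurable_neg).mul
          (Real.continuous_rpow_const hc0).measurable
      · exact (Real.measurable_exp.comp
            (measurable_neg.sub (measurable_const.div measurable_id))).mul
          (Real.continuous_rpow_const hc0).measurable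
    · filter_upwards [self_mem_nhdsWithin] with γ (hγ : γ ∈ Set.Ioi 0)
      rw [ae_restrict_iff' measurableSet_Ioi]
      filter_upwards with u hu
      have hu0 : (0:ℝ) < u := hu
      have hγ0 : (0:ℝ) < γ := hγ
      have hsplit : Real.exp (-u - γ/u) = Real.exp (-u) * Real.exp (-(γ/u)) := by
        rw [← Real.exp_add]; ring_nf
      have he1 : Real.exp (-(γ/u)) ≤ 1 :=
        Real.exp_le_one_iff.2 (neg_nonpos.2 (div_nonneg hγ0.le hu0.le))
      have he2 : 1 - Real.exp (-(γ/u)) ≤ γ/u := by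
        have := Real.add_one_le_exp (-(γ/u)); linarith
      have hFeq : (Real.exp (-u) * u ^ ((N:ℝ)-1) - Real.exp (-u - γ/u) * u ^ ((N:ℝ)-1))/γ
          = Real.exp (-u) * u ^ ((N:ℝ)-1) * ((1 - Real.exp (-(γ/u)))/γ) := by
        rw [hsplit]; ring
      have hnn : 0 ≤ Real.exp (-u) * u ^ ((N:ℝ)-1) * ((1 - Real.exp (-(γ/u)))/γ) := by
        apply mul_nonneg
        · positivity
        · exact div_nonneg (by linarith) hγ0.le
      rw [hFeq, Real.norm_eq_abs, abs_of_nonneg hnn]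
      have hstep : (1 - Real.exp (-(γ/u)))/γ ≤ 1/u := by
        have h3 : (1 - Real.exp (-(γ/u)))/γ ≤ (γ/u)/γ := (div_le_div_iff_of_pos_right hγ0).2 he2
        have h4 : (γ/u)/γ = 1/u := by field_simp
        linarith
      calc Real.exp (-u) * u ^ ((N:ℝ)-1) * ((1 - Real.exp (-(γ/u)))/γ)
          ≤ Real.exp (-u) * u ^ ((N:ℝ)-1) * (1/u) :=
            mul_le_mul_of_nonneg_left hstep (by positivity)
        _ = Real.exp (-u) * u ^ ((N:ℝ)-1-1) := by
            rw [show u ^ ((N:ℝ)-1-1) = u ^ ((N:ℝ)-1) / u by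
              rw [Real.rpow_sub hu0, Real.rpow_one]]
            field_simp
    · exact bound_int
    · rw [ae_restrict_iff' measurableSet_Ioi]
      filter_upwards with u hu
      have hu0 : (0:ℝ) < u := hu
      have h := (tendsto_one_sub_exp_div u hu0).const_mul (Real.exp (-u) * u ^ ((N:ℝ)-1))
      have hlimval : Real.exp (-u) * u ^ ((N:ℝ)-1) * (1/u)
          = Real.exp (-u) * u ^ ((N:ℝ)-1-1) := by
        rw [show u ^ ((N:ℝ)-1-1) = u ^ ((N:ℝ)-1) / u by
          rw [Real.rpow_sub hu0, Real.rpow_one]]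
        field_simp
      rw [hlimval] at h
      refine h.congr fun γ => ?_
      have : Real.exp (-u - γ/u) = Real.exp (-u) * Real.exp (-γ/u) := by
        rw [← Real.exp_add]; ring_nf
      rw [this]; ring
  have hval : (∫ u in Set.Ioi (0:ℝ), Real.exp (-u) * u ^ ((N:ℝ)-1-1))
      = Real.Gamma ((N:ℝ)-1) := (Real.Gamma_eq_integral hc1).symm
  have hne : ((N:ℝ) - 1) ≠ 0 := by linarith
  have hΓ1pos : 0 < Real.Gamma ((N:ℝ)-1) := Real.Gamma_pos_of_pos hc1
  have hfin := hDCT.div_const (Real.Gamma (N:ℝ))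
  rw [hval] at hfin
  have hvv : Real.Gamma ((N:ℝ)-1) / Real.Gamma (N:ℝ) = 1/((N:ℝ)-1) := by
    rw [show (N:ℝ) = ((N:ℝ)-1) + 1 by ring, Real.Gamma_add_one hne]
    rw [show ((N:ℝ)-1) + 1 - 1 = (N:ℝ)-1 by ring]
    field_simp [hΓ1pos.ne']
  rw [hvv] at hfin
  refine hfin.congr' ?_
  filter_upwards [self_mem_nhdsWithin] with γ (hγ : γ ∈ Set.Ioi 0)
  have hγ0 : (0:ℝ) < γ := hγ
  have hkey := besselK_key N hN γ hγ0
  have intγ := int_aux ((N:ℝ)-1) γ hc0 hγ0.le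
  have h1 : 2 * γ ^ ((N:ℝ)/2) / Real.Gamma (N:ℝ) * besselK N (2*Real.sqrt γ)
      = (∫ u in Set.Ioi (0:ℝ), Real.exp (-u - γ/u) * u ^ ((N:ℝ)-1)) / Real.Gamma (N:ℝ) := by
    rw [← hkey]; ring
  have h2 : (∫ u in Set.Ioi (0:ℝ),
        (Real.exp (-u) * u ^ ((N:ℝ)-1) - Real.exp (-u - γ/u) * u ^ ((N:ℝ)-1))/γ)
      = (Real.Gamma (N:ℝ)
          - ∫ u in Set.Ioi (0:ℝ), Real.exp (-u - γ/u) * u ^ ((N:ℝ)-1))/γ := by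
    rw [integral_div, integral_sub int0 intγ, ← hΓint]
  rw [h2, h1]
  field_simp
end
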